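/- arXiv:1512.03037 — 9 statements merged into one kernel-verified Lean document; each statement's English description precedes it below -/
import Mathlib

section
/- Let G be a finite abelian group of order n ≥ 2 and let t ≥ 2 be an integer. Then every t-independent subset A of G satisfies |A| < ((1/2)·⌊t/2⌋!·n)^(1/⌊t/2⌋); in particular, s(G,t) < ((1/2)·⌊t/2⌋!·n)^(1/⌊t/2⌋). -/
/-!
Let `h = ⌊t/2⌋` and `m = |A|`. Because `2h ≤ t`, distinct multisets of `h` elements of `A` have
distinct sums, and no two such sums add up to `0`. So these sums together with `0` form a set `P`
of `multichoose m h + 1` elements with `P ∩ -P = {0}`, whence `2 · multichoose m h < n`. Since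
`h! · multichoose m h = m (m + 1) ⋯ (m + h - 1) ≥ mʰ`, this gives `2 mʰ < h! · n`.
-/

/-- A subset `A` of an (additive) abelian group is `t`-independent if whenever
`λ₁a₁ + ⋯ + λₘaₘ = 0` with `a₁, …, aₘ` the (distinct) elements of `A` and
`|λ₁| + ⋯ + |λₘ| ≤ t`, all coefficients `λᵢ` vanish. -/
def IsTIndep {G : Type*} [AddCommGroup G] (t : ℕ) (A : Finset G) : Prop :=
  ∀ c : G → ℤ, (∀ x ∉ A, c x = 0) →
    (∑ x ∈ A, |c x|) ≤ (t : ℤ) →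
    (∑ x ∈ A, c x • x) = 0 → ∀ x, c x = 0

/-- `sIndep G t` is the maximum size of a `t`-independent subset of `G`
(it is `0` if `G` has no nonempty `t`-independent subset, since `∅` is
`t`-independent). -/
noncomputable def sIndep (G : Type*) [AddCommGroup G] (t : ℕ) : ℕ :=
  sSup {m | ∃ A : Finset G, IsTIndep t A ∧ A.card = m}

open Finset Pointwise Nat

theorem Finset.two_mul_card_le_card_add_one_of_inter_neg_subset {G : Type*} [AddGroup G]
    [Fintype G] [DecidableEq G] {P : Finset G} (hP : P ∩ -P ⊆ {0}) :
    2 * #P ≤ Fintype.card G + 1 := by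
  have h1 : #(P ∪ -P) ≤ Fintype.card G := card_le_univ _
  have h2 : #(P ∩ -P) ≤ 1 := (card_le_card hP).trans (card_singleton _).le
  have h3 := card_union_add_card_inter P (-P)
  rw [card_neg] at h3
  omega

theorem Nat.pow_le_factorial_mul_multichoose (m h : ℕ) : m ^ h ≤ h ! * m.multichoose h := by
  rw [multichoose_eq, ← ascFactorial_eq_factorial_mul_choose']
  exact pow_succ_le_ascFactorial m h

theorem Real.lt_rpow_one_div_of_two_mul_pow_lt {m h n : ℕ} (hh : 0 < h)
    (H : 2 * m ^ h < h ! * n) :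
    (m : ℝ) < (1 / 2 * h ! * n) ^ (1 / (h : ℝ)) := by
  rw [one_div (h : ℝ), Real.lt_rpow_inv_iff_of_pos (by positivity) (by positivity)
    (by exact_mod_cast hh), Real.rpow_natCast]
  have : (2 * m ^ h : ℝ) < h ! * n := by exact_mod_cast H
  linarith

namespace IsTIndep

variable {G : Type*} [AddCommGroup G] {t : ℕ} {A : Finset G}

theorem multiset_eq_of_sum_eq (hA : IsTIndep t A) {p q : Multiset G}
    (hp : ∀ x ∈ p, x ∈ A) (hq : ∀ x ∈ q, x ∈ A) (hcard : p.card + q.card ≤ t)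
    (hsum : p.sum = q.sum) : p = q := by
  classical
  set c : G → ℤ := fun x => p.count x - q.count x
  have hc : ∀ x ∉ A, c x = 0 := fun x hx => by
    simp [c, Multiset.count_eq_zero_of_notMem (mt (hp x) hx),
      Multiset.count_eq_zero_of_notMem (mt (hq x) hx)]
  have habs : ∑ x ∈ A, |c x| ≤ t := calc
    ∑ x ∈ A, |c x| ≤ ∑ x ∈ A, ((p.count x : ℤ) + q.count x) :=
      sum_le_sum fun x _ => (abs_sub _ _).trans (by simp)
    _ = p.card + q.card := by
      rw [sum_add_distrib, ← Multiset.sum_count_eq_card hp, ← Multiset.sum_count_eq_card hq]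
      push_cast; rfl
    _ ≤ t := by exact_mod_cast hcard
  have hlin : ∑ x ∈ A, c x • x = 0 := by
    simp only [c, sub_smul, sum_sub_distrib, natCast_zsmul]
    rw [← sum_multiset_count_of_subset p A fun x hx => hp x (Multiset.mem_toFinset.1 hx),
      ← sum_multiset_count_of_subset q A fun x hx => hq x (Multiset.mem_toFinset.1 hx),
      hsum, sub_self]
  ext x
  exact_mod_cast sub_eq_zero.1 (hA c hc habs hlin x)

theorem multiset_eq_zero_of_sum_add_sum_eq_zero (hA : IsTIndep t A) {p q : Multiset G}
    (hp : ∀ x ∈ p, x ∈ A) (hq : ∀ x ∈ q, x ∈ A) (hcard : p.card + q.card ≤ t)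
    (hsum : p.sum + q.sum = 0) : p = 0 :=
  (add_eq_zero.1 <| hA.multiset_eq_of_sum_eq
    (by simpa [or_imp, forall_and] using ⟨hp, hq⟩) (by simp) (by simpa using hcard)
    (by simpa using hsum)).1

theorem two_mul_multichoose_lt_card [Fintype G] (hA : IsTIndep t A) {h : ℕ} (hh : 0 < h)
    (hht : 2 * h ≤ t) : 2 * A.card.multichoose h < Fintype.card G := by
  classical
  let σ : Sym A h → G := fun s => ((s : Multiset A).map Subtype.val).sum
  have hmem : ∀ s : Sym A h, ∀ x ∈ (s : Multiset A).map Subtype.val, x ∈ A := fun _ _ hx => by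
    obtain ⟨a, -, rfl⟩ := Multiset.mem_map.1 hx
    exact a.2
  have hcard : ∀ s : Sym A h, ((s : Multiset A).map Subtype.val).card = h := by simp
  have hinj : Function.Injective σ := fun s s' hs =>
    Sym.coe_injective <| Multiset.map_injective Subtype.val_injective <|
      hA.multiset_eq_of_sum_eq (hmem s) (hmem s') (by simp only [hcard]; omega) hs
  have hpair : ∀ s s', σ s + σ s' ≠ 0 := fun s s' hs => by
    have := congrArg Multiset.card <| hA.multiset_eq_zero_of_sum_add_sum_eq_zero
      (hmem s) (hmem s') (by simp only [hcard]; omega) hs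
    rw [hcard, Multiset.card_zero] at this
    omega
  have h0 : 0 ∉ univ.image σ := by
    simpa using fun s hs => hpair s s (by rw [hs, add_zero])
  have hP : insert 0 (univ.image σ) ∩ -insert 0 (univ.image σ) ⊆ {0} := by
    intro x hx
    simp only [mem_inter, mem_neg', mem_insert, mem_image, mem_univ, true_and,
      neg_eq_zero] at hx
    obtain ⟨rfl | ⟨s, rfl⟩, hzero | ⟨s', hs'⟩⟩ := hx
    iterate 2 exact mem_singleton_self 0
    · exact mem_singleton.2 hzero
    · exact absurd (by rw [hs', neg_add_cancel]) (hpair s' s)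
  have := Finset.two_mul_card_le_card_add_one_of_inter_neg_subset hP
  rw [card_insert_of_notMem h0, card_image_of_injective _ hinj, Finset.card_univ,
    Sym.card_sym_eq_multichoose, Fintype.card_coe] at this
  omega

theorem two_mul_card_pow_lt [Fintype G] (hA : IsTIndep t A) {h : ℕ} (hh : 0 < h)
    (hht : 2 * h ≤ t) : 2 * A.card ^ h < h ! * Fintype.card G := calc
  2 * A.card ^ h ≤ h ! * (2 * A.card.multichoose h) := by
    have := Nat.pow_le_factorial_mul_multichoose A.card h
    rw [mul_left_comm]; omega
  _ < h ! * Fintype.card G :=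
    Nat.mul_lt_mul_of_pos_left (hA.two_mul_multichoose_lt_card hh hht) (factorial_pos h)

end IsTIndep

theorem exists_isTIndep_card_eq_sIndep (G : Type*) [AddCommGroup G] [Finite G] (t : ℕ) :
    ∃ A : Finset G, IsTIndep t A ∧ A.card = sIndep G t := by
  have := Fintype.ofFinite G
  refine Nat.sSup_mem (s := {m | ∃ A : Finset G, IsTIndep t A ∧ A.card = m})
    ⟨0, ∅, fun c hc _ _ x => hc x (notMem_empty x), card_empty⟩ ⟨Fintype.card G, ?_⟩
  rintro _ ⟨A, -, rfl⟩
  exact card_le_univ A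

theorem stmt0_general {G : Type*} [AddCommGroup G] [Fintype G] (t : ℕ)
    (ht : 2 ≤ t) :
    (∀ A : Finset G, IsTIndep t A →
      (A.card : ℝ) <
        ((1 : ℝ) / 2 * (Nat.factorial (t / 2) : ℝ) * (Fintype.card G : ℝ)) ^
          ((1 : ℝ) / ((t / 2 : ℕ) : ℝ))) ∧
    (sIndep G t : ℝ) <
      ((1 : ℝ) / 2 * (Nat.factorial (t / 2) : ℝ) * (Fintype.card G : ℝ)) ^
        ((1 : ℝ) / ((t / 2 : ℕ) : ℝ)) := by
  have hbound : ∀ A : Finset G, IsTIndep t A → (A.card : ℝ) <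
      (1 / 2 * (t / 2)! * Fintype.card G) ^ (1 / ((t / 2 : ℕ) : ℝ)) := fun A hA =>
    Real.lt_rpow_one_div_of_two_mul_pow_lt (by omega)
      (hA.two_mul_card_pow_lt (by omega) (by omega))
  obtain ⟨A, hA, hcard⟩ := exists_isTIndep_card_eq_sIndep G t
  refine ⟨hbound, ?_⟩
  rw [← hcard]
  exact hbound A hA

theorem stmt0 {G : Type*} [AddCommGroup G] [Fintype G] (t : ℕ)
    (hn : 2 ≤ Fintype.card G) (ht : 2 ≤ t) :
    (∀ A : Finset G, IsTIndep t A →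
      (A.card : ℝ) <
        ((1 : ℝ) / 2 * (Nat.factorial (t / 2) : ℝ) * (Fintype.card G : ℝ)) ^
          ((1 : ℝ) / ((t / 2 : ℕ) : ℝ))) ∧
    (sIndep G t : ℝ) <
      ((1 : ℝ) / 2 * (Nat.factorial (t / 2) : ℝ) * (Fintype.card G : ℝ)) ^
        ((1 : ℝ) / ((t / 2 : ℕ) : ℝ)) :=
  stmt0_general t ht
end

section
/- Let G be a finite abelian group of order n ≥ 2. Then the maximum size of a 2-independent subset of G equals (n - |Ord(G,2)|)/2, where Ord(G,2) = {x ∈ G : 2x = 0}. -/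
open Finset
open scoped Pointwise

-- Any well-order on `α` chooses one element from each pair `{x, -x}`.
lemma Finset.exists_disjoint_neg_union_neg_eq {α : Type*} [DecidableEq α] [InvolutiveNeg α]
    {S : Finset α} (hS : -S = S) (hfix : ∀ x ∈ S, -x ≠ x) :
    ∃ A : Finset α, Disjoint A (-A) ∧ A ∪ -A = S := by
  let _ : LinearOrder α := WellOrderingRel.isWellOrder.linearOrder
  refine ⟨{x ∈ S | x < -x}, ?_, ?_⟩
  · rw [neg_filter, hS, disjoint_filter]
    intro x _ h h'
    rw [neg_neg] at h'
    exact lt_asymm h h'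
  · rw [neg_filter, hS, ← filter_or]
    refine filter_true_of_mem fun x hx => ?_
    rw [neg_neg]
    exact lt_or_gt_of_ne (hfix x hx).symm

lemma Finset.card_union_neg_of_disjoint {α : Type*} [DecidableEq α] [InvolutiveNeg α]
    {A : Finset α} (hA : Disjoint A (-A)) : #(A ∪ -A) = 2 * #A := by
  rw [card_union_of_disjoint hA, card_neg, two_mul]

section TwoIndependence

variable {G : Type*} [AddCommGroup G]

lemma neg_eq_self_iff_two_nsmul_eq_zero {x : G} : -x = x ↔ 2 • x = 0 := by
  rw [neg_eq_iff_add_eq_zero, two_nsmul]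

lemma neg_eq_self_of_zsmul_eq_zero {k : ℤ} (hk0 : k ≠ 0) (hk : |k| ≤ 2) {x : G}
    (h : k • x = 0) : -x = x := by
  rw [neg_eq_iff_add_eq_zero]
  rcases abs_le.1 hk with ⟨hk₁, hk₂⟩
  obtain rfl | rfl | rfl | rfl : k = 1 ∨ k = -1 ∨ k = 2 ∨ k = -2 := by omega
  all_goals simp only [one_smul, neg_smul, neg_eq_zero, two_zsmul] at h
  all_goals simp [h]

lemma eq_or_neg_eq_of_zsmul_add_zsmul_eq_zero {u v : ℤ} (hu : |u| = 1) (hv : |v| = 1)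
    {x y : G} (h : u • x + v • y = 0) : x = y ∨ -x = y := by
  rcases abs_eq (zero_le_one' ℤ) |>.1 hu with rfl | rfl <;>
    rcases abs_eq (zero_le_one' ℤ) |>.1 hv with rfl | rfl <;>
    simp only [one_smul, neg_smul] at h
  · exact .inr (neg_eq_iff_add_eq_zero.2 h)
  · exact .inl (sub_eq_zero.1 (by rwa [sub_eq_add_neg]))
  · exact .inl (neg_add_eq_zero.1 h)
  · exact .inr (neg_eq_iff_add_eq_zero.2 (neg_eq_zero.1 (by rwa [neg_add])))

variable [DecidableEq G]

lemma IsTIndep.disjoint_neg {t : ℕ} (ht : 2 ≤ t) {A : Finset G} (hA : IsTIndep t A) :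
    Disjoint A (-A) := by
  refine disjoint_left.2 fun x hx hnx => ?_
  rw [mem_neg'] at hnx
  -- the relation `x + (-x) = 0`, which reads `2 • x = 0` when `x = -x`
  let c : G → ℤ := fun y => (if y = x then 1 else 0) + (if y = -x then 1 else 0)
  have hcx := hA c ?_ ?_ ?_ x
  · simp only [c, if_true] at hcx
    split_ifs at hcx <;> omega
  · intro y hy
    simp [c, ne_of_mem_of_not_mem hx hy |>.symm, ne_of_mem_of_not_mem hnx hy |>.symm]
  · calc ∑ y ∈ A, |c y| = ∑ y ∈ A, c y := sum_congr rfl fun y _ => abs_of_nonneg (by positivity)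
      _ = 2 := by simp [c, sum_add_distrib, hx, hnx]
      _ ≤ t := by exact_mod_cast ht
  · simp [c, add_smul, sum_add_distrib, ite_smul, hx, hnx]

lemma isTIndep_two_of_disjoint_neg {A : Finset G} (hA : Disjoint A (-A)) : IsTIndep 2 A := by
  have hnegA : ∀ x ∈ A, -x ∉ A := fun x hx hnx => disjoint_left.1 hA hx (mem_neg'.2 hnx)
  intro c hc hle hsum x
  by_contra hcx
  set T := A.filter (c · ≠ 0) with hT
  have hxT : x ∈ T := mem_filter.2 ⟨not_not.1 (mt (hc x) hcx), hcx⟩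
  have hsumT : ∑ y ∈ T, c y • y = 0 := by
    rw [hT, sum_filter_of_ne fun y _ => mt fun h => by rw [h, zero_smul], hsum]
  have habsT : ∑ y ∈ T, |c y| ≤ 2 := by
    rwa [hT, sum_filter_of_ne fun y _ => mt fun h => by rw [h, abs_zero]]
  have hone : ∀ y ∈ T, 1 ≤ |c y| := fun y hy => Int.one_le_abs (mem_filter.1 hy).2
  have hcard : #T ≤ 2 := by
    have := card_nsmul_le_sum T _ 1 hone
    simp only [nsmul_eq_mul, mul_one] at this
    omega
  obtain hT1 | hT2 : #T = 1 ∨ #T = 2 := by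
    have := card_pos.2 ⟨x, hxT⟩
    omega
  · obtain ⟨a, ha⟩ := card_eq_one.1 hT1
    have haT : a ∈ T := by simp [ha]
    rw [ha, sum_singleton] at hsumT habsT
    have haA := filter_subset _ _ haT
    exact hnegA a haA (by rwa [neg_eq_self_of_zsmul_eq_zero (mem_filter.1 haT).2 habsT hsumT])
  · obtain ⟨a, b, hab, hTab⟩ := card_eq_two.1 hT2
    have haT : a ∈ T := by simp [hTab]
    have hbT : b ∈ T := by simp [hTab]
    rw [hTab, sum_pair hab] at hsumT habsT
    have := hone a haT
    have := hone b hbT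
    obtain rfl | hba := eq_or_neg_eq_of_zsmul_add_zsmul_eq_zero (by omega) (by omega) hsumT
    · exact hab rfl
    · exact hnegA a (filter_subset _ _ haT) (hba ▸ filter_subset _ _ hbT)

lemma isTIndep_two_iff_disjoint_neg {A : Finset G} : IsTIndep 2 A ↔ Disjoint A (-A) :=
  ⟨IsTIndep.disjoint_neg le_rfl, isTIndep_two_of_disjoint_neg⟩

variable [Fintype G]

lemma neg_filter_two_nsmul_ne_zero :
    -({x | 2 • x ≠ 0} : Finset G) = ({x | 2 • x ≠ 0} : Finset G) := by
  ext x
  simp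

lemma union_neg_subset_filter_two_nsmul_ne_zero {A : Finset G} (hA : Disjoint A (-A)) :
    A ∪ -A ⊆ ({x | 2 • x ≠ 0} : Finset G) := by
  intro x hx
  rw [mem_filter, ne_eq, ← neg_eq_self_iff_two_nsmul_eq_zero]
  refine ⟨mem_univ x, fun hxx => ?_⟩
  have hx' : x ∈ A ∧ x ∈ -A := by
    rw [mem_neg', hxx, and_self]
    rwa [mem_union, mem_neg', hxx, or_self] at hx
  exact disjoint_left.1 hA hx'.1 hx'.2

lemma card_filter_two_nsmul_ne_zero :
    #({x | 2 • x ≠ 0} : Finset G) = Fintype.card G - Nat.card {x : G // 2 • x = 0} := by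
  simp only [ne_eq]
  rw [Nat.card_eq_fintype_card, Fintype.card_subtype, ← card_univ,
    ← card_filter_add_card_filter_not (s := univ) (fun x : G => 2 • x = 0)]
  omega

end TwoIndependence

theorem stmt4_general {G : Type*} [AddCommGroup G] [Fintype G] :
    2 * sIndep G 2 = Fintype.card G - Nat.card {x : G // 2 • x = 0} := by
  classical
  obtain ⟨A, hA, hAS⟩ := exists_disjoint_neg_union_neg_eq (neg_filter_two_nsmul_ne_zero (G := G))
    fun x hx => by simpa [neg_eq_self_iff_two_nsmul_eq_zero] using hx
  have hmax : sIndep G 2 = #A := by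
    refine IsGreatest.csSup_eq ⟨⟨A, isTIndep_two_iff_disjoint_neg.2 hA, rfl⟩, ?_⟩
    rintro _ ⟨B, hB, rfl⟩
    rw [isTIndep_two_iff_disjoint_neg] at hB
    have := card_le_card (union_neg_subset_filter_two_nsmul_ne_zero hB)
    rw [card_union_neg_of_disjoint hB, ← hAS, card_union_neg_of_disjoint hA] at this
    omega
  rw [hmax, ← card_union_neg_of_disjoint hA, hAS, card_filter_two_nsmul_ne_zero]

theorem stmt4 {G : Type*} [AddCommGroup G] [Fintype G]
    (hn : 2 ≤ Fintype.card G) :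
    2 * sIndep G 2 = Fintype.card G - Nat.card {x : G // 2 • x = 0} :=
  stmt4_general
end

section
/- Let G be a finite abelian group of order n ≥ 2. If every element x of G satisfies 2x = 0 (i.e., G is an elementary abelian 2-group), then G has no nonempty 2-independent subset, so s(G,2) = 0. Otherwise, n/4 ≤ s(G,2) ≤ n/2. -/
/-!
A set `A` is 2-independent exactly when `a + b ≠ 0` for all `a, b ∈ A`, i.e. when `A` and `-A`
are disjoint. This gives `2 |A| ≤ n`, and forces `A = ∅` when every element satisfies `2x = 0`.
Conversely, keeping from each pair `{x, -x}` with `x ≠ -x` the element that comes first in an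
enumeration of `G` gives a 2-independent set of half the size of `{x | 2x ≠ 0}`. If `2x₀ ≠ 0`,
translation by `x₀` injects `{x | 2x = 0}` into `{x | 2x ≠ 0}`, so the latter has at least `n/2`
elements.
-/

open Finset
open scoped Pointwise

section TwoIndependence

variable {G : Type*} [AddCommGroup G]

lemma isTIndep_empty (t : ℕ) : IsTIndep t (∅ : Finset G) :=
  fun _ hc _ _ x => hc x (notMem_empty x)

lemma le_sIndep [Finite G] {t : ℕ} {A : Finset G} (hA : IsTIndep t A) : #A ≤ sIndep G t := by
  have := Fintype.ofFinite G
  refine le_csSup ⟨Fintype.card G, ?_⟩ ⟨A, hA, rfl⟩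
  rintro m ⟨B, -, rfl⟩
  exact card_le_univ B

lemma sIndep_le {t m : ℕ} (h : ∀ A : Finset G, IsTIndep t A → #A ≤ m) : sIndep G t ≤ m :=
  csSup_le ⟨0, ∅, isTIndep_empty t, rfl⟩ (by rintro _ ⟨A, hA, rfl⟩; exact h A hA)

lemma add_self_eq_zero_of_zsmul_eq_zero {k : ℤ} {x : G} (hk : k ≠ 0) (hk2 : |k| ≤ 2)
    (h : k • x = 0) : x + x = 0 := by
  have habs : |k| • x = 0 := by rcases abs_choice k with hk' | hk' <;> simp [hk', h]
  rcases (show |k| = 1 ∨ |k| = 2 by have := Int.one_le_abs hk; omega) with h' | h' <;>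
    simp_all [two_zsmul]

lemma add_eq_zero_or_eq_of_zsmul_add_zsmul_eq_zero {k l : ℤ} {a b : G} (hk : |k| = 1)
    (hl : |l| = 1) (h : k • a + l • b = 0) : a + b = 0 ∨ a = b := by
  rw [abs_eq zero_le_one] at hk hl
  rcases hk with rfl | rfl <;> rcases hl with rfl | rfl
  · exact .inl (by simpa using h)
  · exact .inr (sub_eq_zero.mp (by simpa [sub_eq_add_neg] using h))
  · exact .inr (by simpa [neg_add_eq_zero, eq_comm] using h)
  · exact .inl (neg_eq_zero.mp (by rw [neg_add]; simpa using h))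

lemma add_ne_zero_of_isTIndep_two {A : Finset G} (hA : IsTIndep 2 A) :
    ∀ a ∈ A, ∀ b ∈ A, a + b ≠ 0 := by
  classical
  intro a ha b hb hab
  let c : G → ℤ := fun x => (if x = a then 1 else 0) + (if x = b then 1 else 0)
  have hc0 : ∀ x, 0 ≤ c x := fun x => by positivity
  have hsupp : ∀ x ∉ A, c x = 0 := fun x hx => by
    simp [c, (ne_of_mem_of_not_mem ha hx).symm, (ne_of_mem_of_not_mem hb hx).symm]
  have habs : ∑ x ∈ A, |c x| = 2 := by
    simp only [abs_of_nonneg (hc0 _)]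
    simp [c, sum_add_distrib, ha, hb]
  have hca := hA c hsupp habs.le (by simpa [c, add_smul, sum_add_distrib, ite_smul, ha, hb]) a
  simp only [c] at hca
  split_ifs at hca <;> omega

lemma isTIndep_two_of_add_ne_zero {A : Finset G} (hA : ∀ a ∈ A, ∀ b ∈ A, a + b ≠ 0) :
    IsTIndep 2 A := by
  classical
  intro c hsupp habs hsum
  by_contra! ⟨x, hx⟩
  set S := A.filter (c · ≠ 0)
  have hSA : S ⊆ A := filter_subset _ _
  have hxS : x ∈ S := mem_filter.2 ⟨by_contra fun h => hx (hsupp x h), hx⟩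
  have hone : ∀ y ∈ S, 1 ≤ |c y| := fun y hy => Int.one_le_abs (mem_filter.1 hy).2
  have hSsum : ∑ y ∈ S, c y • y = 0 := by
    rwa [sum_filter_of_ne fun y _ h => by contrapose! h; simp [h]]
  have hSabs : ∑ y ∈ S, |c y| ≤ 2 := by rwa [sum_filter_of_ne fun y _ h => by simpa using h]
  have hcard : #S ≤ 2 := by
    have := card_nsmul_le_sum S _ 1 hone
    simp only [nsmul_eq_mul, mul_one] at this
    omega
  obtain hS1 | hS2 : #S = 1 ∨ #S = 2 := by have := card_pos.2 ⟨x, hxS⟩; omega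
  · obtain ⟨a, hS⟩ := card_eq_one.1 hS1
    have haS : a ∈ S := hS ▸ mem_singleton_self a
    rw [hS, sum_singleton] at hSsum hSabs
    exact hA a (hSA haS) a (hSA haS)
      (add_self_eq_zero_of_zsmul_eq_zero (mem_filter.1 haS).2 hSabs hSsum)
  · obtain ⟨a, b, hab, hS⟩ := card_eq_two.1 hS2
    have haS : a ∈ S := hS ▸ mem_insert_self a {b}
    have hbS : b ∈ S := hS ▸ mem_insert_of_mem (mem_singleton_self b)
    rw [hS, sum_pair hab] at hSsum hSabs
    have ha1 := hone a haS
    have hb1 := hone b hbS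
    obtain h | h := add_eq_zero_or_eq_of_zsmul_add_zsmul_eq_zero (by omega) (by omega) hSsum
    · exact hA a (hSA haS) b (hSA hbS) h
    · exact hab h

lemma isTIndep_two_iff {A : Finset G} : IsTIndep 2 A ↔ ∀ a ∈ A, ∀ b ∈ A, a + b ≠ 0 :=
  ⟨add_ne_zero_of_isTIndep_two, isTIndep_two_of_add_ne_zero⟩

lemma two_mul_card_le_of_add_ne_zero [Fintype G] {A : Finset G}
    (hA : ∀ a ∈ A, ∀ b ∈ A, a + b ≠ 0) : 2 * #A ≤ Fintype.card G := by
  classical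
  have hdisj : Disjoint A (-A) :=
    disjoint_left.2 fun a ha hna => hA a ha (-a) (mem_neg'.1 hna) (add_neg_cancel a)
  calc 2 * #A = #(A ∪ -A) := by rw [card_union_of_disjoint hdisj, card_neg]; ring
    _ ≤ Fintype.card G := card_le_univ _

lemma exists_add_ne_zero_two_mul_card_eq [Fintype G] [DecidableEq G] :
    ∃ A : Finset G, (∀ a ∈ A, ∀ b ∈ A, a + b ≠ 0) ∧ 2 * #A = #{x : G | x + x ≠ 0} := by
  let e := Fintype.equivFin G
  refine ⟨({x | e x < e (-x)} : Finset G), ?_, ?_⟩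
  · intro a ha b hb hab
    rw [eq_neg_of_add_eq_zero_right hab] at hb
    simp only [mem_filter, mem_univ, true_and, neg_neg] at ha hb
    exact lt_asymm ha hb
  · have hneg : #{x : G | e (-x) < e x} = #{x : G | e x < e (-x)} :=
      card_nbij' Neg.neg Neg.neg (fun x => by simp) (fun x => by simp) (fun x _ => neg_neg x)
        (fun x _ => neg_neg x)
    have hsplit : #{x : G | x + x ≠ 0} = #{x : G | e x < e (-x) ∨ e (-x) < e x} := by
      congr 1
      ext x
      simp only [mem_filter, mem_univ, true_and, lt_or_lt_iff_ne, ne_eq,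
        e.injective.eq_iff, eq_neg_iff_add_eq_zero]
    rw [hsplit, filter_or, card_union_of_disjoint (disjoint_filter.2 fun x _ h => h.asymm), hneg]
    ring

lemma card_add_self_eq_zero_le [Fintype G] [DecidableEq G] {x₀ : G} (hx₀ : x₀ + x₀ ≠ 0) :
    #{x : G | x + x = 0} ≤ #{x : G | x + x ≠ 0} :=
  card_le_card_of_injOn (· + x₀)
    (fun x hx => by simp_all [add_add_add_comm x x₀ x x₀]) (add_left_injective x₀).injOn

end TwoIndependence

theorem stmt5_general {G : Type*} [AddCommGroup G] [Fintype G] :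
    ((∀ x : G, 2 • x = 0) → sIndep G 2 = 0) ∧
    (¬ (∀ x : G, 2 • x = 0) →
      (Fintype.card G : ℚ) / 4 ≤ (sIndep G 2 : ℚ) ∧
      (sIndep G 2 : ℚ) ≤ (Fintype.card G : ℚ) / 2) := by
  classical
  simp only [two_nsmul]
  refine ⟨fun h2 => Nat.eq_zero_of_le_zero (sIndep_le fun A hA => ?_), fun h2 => ?_⟩
  · rw [Nat.le_zero, card_eq_zero, eq_empty_iff_forall_notMem]
    exact fun a ha => isTIndep_two_iff.1 hA a ha a ha (h2 a)
  · obtain ⟨x₀, hx₀⟩ := not_forall.1 h2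
    obtain ⟨A, hA, hAcard⟩ := exists_add_ne_zero_two_mul_card_eq (G := G)
    have hlower := le_sIndep (isTIndep_two_iff.2 hA)
    have hupper : sIndep G 2 ≤ Fintype.card G / 2 := sIndep_le fun B hB =>
      (Nat.le_div_iff_mul_le two_pos).2 <| by
        simpa [mul_comm] using two_mul_card_le_of_add_ne_zero (isTIndep_two_iff.1 hB)
    have htorsion := card_add_self_eq_zero_le hx₀
    have hpartition := card_filter_add_card_filter_not (s := univ) (fun x : G => x + x = 0)
    rw [card_univ] at hpartition
    simp only [ne_eq] at hAcard htorsion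
    constructor
    · rw [div_le_iff₀ four_pos]
      exact_mod_cast (by omega : Fintype.card G ≤ sIndep G 2 * 4)
    · rw [le_div_iff₀ two_pos]
      exact_mod_cast (by omega : sIndep G 2 * 2 ≤ Fintype.card G)

theorem stmt5 {G : Type*} [AddCommGroup G] [Fintype G]
    (hn : 2 ≤ Fintype.card G) :
    ((∀ x : G, 2 • x = 0) → sIndep G 2 = 0) ∧
    (¬ (∀ x : G, 2 • x = 0) →
      (Fintype.card G : ℚ) / 4 ≤ (sIndep G 2 : ℚ) ∧
      (sIndep G 2 : ℚ) ≤ (Fintype.card G : ℚ) / 2) :=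
  stmt5_general
end

section
/- Let G be a finite abelian group of order n ≥ 2 whose exponent κ is congruent to 2 modulo 4. Then every 3-independent subset A of G satisfies |A| ≤ (n - |Ord(G,2)|)/4, where Ord(G,2) = {x ∈ G : 2x = 0}. -/
/-!
Write `κ = 2m` with `m` odd. Then `x = (x - π x) + π x` with `π x = (m + 1) • x`, where
`x - π x = -m • x` lies in the 2-torsion `E` and `π x` in the `m`-torsion `H`, and `|G| = |E| |H|`.
For a 3-independent `A` no sum `a + b` of elements of `A` vanishes, so `π a ≠ 0`, and the signed
fibres `N y = #{a ∈ A | π a = ±y}` sum to `2|A|` over `y ∈ H ∖ {0}`; so do the `N (2 • y)`, since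
doubling permutes `H ∖ {0}`. It remains to see `N y + N (2 • y) ≤ |E|`. The map `a ↦ a - π a`
is injective on each fibre, and translating the image of the fibre over `y` by `a₀ - π a₀`
(for some `a₀` in it) makes it disjoint from the image of the fibre over `2 • y`: a coincidence
gives a relation `±a₀ ± a ± b = 0`, of weight 3 and odd coefficient sum, in `A`.
Summing, `4|A| ≤ (|H| - 1) |E| = |G| - |E|`.
-/

section

open Finset

variable {G : Type*} [AddCommGroup G]

lemma Finset.sum_pi_single_smul [DecidableEq G] {A : Finset G} {a : G} (ha : a ∈ A) (α : ℤ) :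
    ∑ x ∈ A, (Pi.single a α : G → ℤ) x • x = α • a :=
  (sum_eq_single_of_mem a ha fun b _ hb => by simp [hb]).trans (by simp)

namespace IsTIndep

variable {t : ℕ} {A : Finset G}

lemma smul_add_smul_add_smul_ne_zero (hA : IsTIndep t A) {a b c : G}
    (ha : a ∈ A) (hb : b ∈ A) (hc : c ∈ A) {α β γ : ℤ} (hle : |α| + |β| + |γ| ≤ t)
    (hsum : α + β + γ ≠ 0) : α • a + β • b + γ • c ≠ 0 := by
  classical
  intro hrel
  set f : G → ℤ := Pi.single a α + Pi.single b β + Pi.single c γ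
  have hf : ∀ x, f x = 0 := by
    refine hA f (fun x hx => ?_) ?_ ?_
    · simp [f, ne_of_mem_of_not_mem ha hx |>.symm,
        ne_of_mem_of_not_mem hb hx |>.symm, ne_of_mem_of_not_mem hc hx |>.symm]
    · calc ∑ x ∈ A, |f x|
          ≤ ∑ x ∈ A, (|Pi.single a α x| + |Pi.single b β x| + |Pi.single c γ x|) :=
            sum_le_sum fun x _ => (abs_add_le _ _).trans (add_le_add_left (abs_add_le _ _) _)
        _ = |α| + |β| + |γ| := by
            simp only [sum_add_distrib, Pi.apply_single (fun _ => abs) (fun _ => abs_zero),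
              sum_pi_single', ha, hb, hc, if_true]
        _ ≤ t := hle
    · simp only [f, Pi.add_apply, add_smul, sum_add_distrib, sum_pi_single_smul ha,
        sum_pi_single_smul hb, sum_pi_single_smul hc, hrel]
  apply hsum
  have := sum_congr rfl fun x (_ : x ∈ A) => hf x
  simpa [f, sum_add_distrib, sum_pi_single', ha, hb, hc] using this

lemma add_ne_zero (hA : IsTIndep t A) (ht : 2 ≤ t) {a b : G} (ha : a ∈ A) (hb : b ∈ A) :
    a + b ≠ 0 := by
  simpa using hA.smul_add_smul_add_smul_ne_zero ha hb ha (α := 1) (β := 1) (γ := 0)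
    (by norm_num; exact_mod_cast ht) (by norm_num)

end IsTIndep

lemma exists_sign_zsmul_eq_add {a e w : G} (he : 2 • e = 0) (h : a - e = w ∨ a - e = -w) :
    ∃ σ : ℤ, (σ = 1 ∨ σ = -1) ∧ σ • a = e + w := by
  rcases h with h | h
  · exact ⟨1, .inl rfl, by rw [one_zsmul, ← h]; abel⟩
  · refine ⟨-1, .inr rfl, ?_⟩
    have hw : w = e - a := by rw [← neg_sub, h, neg_neg]
    rw [neg_one_zsmul, hw, ← add_sub_assoc, ← two_nsmul, he, zero_sub]

section OddExponent

variable {m : ℕ}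

lemma Odd.nsmul_eq_self (hm : Odd m) {x : G} (hx : 2 • x = 0) : m • x = x := by
  obtain ⟨k, rfl⟩ := hm
  rw [succ_nsmul, mul_nsmul, hx, nsmul_zero, zero_add]

lemma two_nsmul_sub_succ_nsmul (hexp : ∀ x : G, (2 * m) • x = 0) (x : G) :
    2 • (x - (m + 1) • x) = 0 := by
  rw [show x - (m + 1) • x = -(m • x) by rw [succ_nsmul]; abel, smul_neg, ← mul_nsmul', hexp,
    neg_zero]

lemma nsmul_succ_nsmul_eq_zero (hm : Odd m) (hexp : ∀ x : G, (2 * m) • x = 0) (x : G) :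
    m • (m + 1) • x = 0 := by
  obtain ⟨k, rfl⟩ := hm
  rw [smul_smul, show (2 * k + 1) * (2 * k + 1 + 1) = (k + 1) * (2 * (2 * k + 1)) by ring,
    mul_nsmul', hexp, nsmul_zero]

end OddExponent

variable [DecidableEq G]

def signedFiber (π : G → G) (A : Finset G) (y : G) : Finset G := {a ∈ A | π a = y ∨ π a = -y}

variable (G) in
def twoTorsion [Fintype G] : Finset G := {x | 2 • x = 0}

section SignedFiber

variable {t : ℕ} {A : Finset G} {π : G → G}

lemma injOn_sub_signedFiber (hA : IsTIndep t A) (ht : 2 ≤ t) (hπ : ∀ x, 2 • (x - π x) = 0)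
    (w : G) : Set.InjOn (fun a => a - π a) (signedFiber π A w) := by
  intro a ha a' ha' h
  simp only [signedFiber, coe_filter, Set.mem_ofPred_eq] at ha ha' h
  have hsum : a + a' = 2 • (a - π a) + (π a + π a') := by
    rw [two_nsmul]; nth_rw 2 [h]; abel
  rcases ha with ⟨haA, hw | hw⟩ <;> rcases ha' with ⟨ha'A, hw' | hw'⟩
  · rwa [hw, hw', sub_left_inj] at h
  · exact absurd (by rw [hsum, hπ, hw, hw', add_neg_cancel, add_zero])
      (hA.add_ne_zero ht haA ha'A)
  · exact absurd (by rw [hsum, hπ, hw, hw', neg_add_cancel, add_zero])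
      (hA.add_ne_zero ht haA ha'A)
  · rwa [hw, hw', sub_left_inj] at h

lemma sub_ne_add_sub_of_mem_signedFiber (hA : IsTIndep 3 A) (hπ : ∀ x, 2 • (x - π x) = 0)
    {y a₀ a b : G} (ha₀ : a₀ ∈ signedFiber π A y) (ha : a ∈ signedFiber π A y)
    (hb : b ∈ signedFiber π A (2 • y)) : b - π b ≠ (a - π a) + (a₀ - π a₀) := by
  intro h
  simp only [signedFiber, mem_filter] at ha₀ ha hb
  obtain ⟨σ₀, hσ₀, hσ₀a₀⟩ :=
    exists_sign_zsmul_eq_add (hπ a₀) (by rw [sub_sub_cancel]; exact ha₀.2)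
  obtain ⟨σ, hσ, hσa⟩ := exists_sign_zsmul_eq_add (hπ a) (by rw [sub_sub_cancel]; exact ha.2)
  obtain ⟨δ, hδ, hδb⟩ := exists_sign_zsmul_eq_add (hπ b) (by rw [sub_sub_cancel]; exact hb.2)
  refine hA.smul_add_smul_add_smul_ne_zero ha₀.1 ha.1 hb.1 (α := σ₀) (β := σ) (γ := -δ)
    ?_ ?_ ?_
  · rcases hσ₀ with rfl | rfl <;> rcases hσ with rfl | rfl <;> rcases hδ with rfl | rfl <;> rfl
  · rcases hσ₀ with rfl | rfl <;> rcases hσ with rfl | rfl <;> rcases hδ with rfl | rfl <;> decide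
  · rw [neg_zsmul, hσ₀a₀, hσa, hδb, h]; abel

theorem card_signedFiber_add_card_signedFiber_two_nsmul_le [Fintype G] (hA : IsTIndep 3 A)
    (hπ : ∀ x, 2 • (x - π x) = 0) (y : G) :
    #(signedFiber π A y) + #(signedFiber π A (2 • y)) ≤ #(twoTorsion G) := by
  set ε : G → G := fun a => a - π a
  have hcard (w : G) : #((signedFiber π A w).image ε) = #(signedFiber π A w) :=
    card_image_of_injOn (injOn_sub_signedFiber hA (by norm_num) hπ w)
  have himage (s : Finset G) : s.image ε ⊆ twoTorsion G :=
    image_subset_iff.2 fun x _ => by simp [twoTorsion, ε, hπ x]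
  rcases (signedFiber π A y).eq_empty_or_nonempty with hempty | ⟨a₀, ha₀⟩
  · rw [hempty, card_empty, zero_add, ← hcard]
    exact card_le_card (himage _)
  set U := ((signedFiber π A y).image ε).image (· + ε a₀)
  have hU : #U = #(signedFiber π A y) := by
    rw [card_image_of_injective _ (add_left_injective _), hcard]
  have hUsub : U ⊆ twoTorsion G := by
    simp only [U, twoTorsion, image_image, image_subset_iff, mem_filter, mem_univ, true_and]
    intro a _
    rw [Function.comp_apply, nsmul_add, hπ, hπ, add_zero]
  have hdisj : Disjoint U ((signedFiber π A (2 • y)).image ε) := by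
    simp only [U, disjoint_left, image_image, mem_image, Function.comp_apply]
    rintro _ ⟨a, ha, rfl⟩ ⟨b, hb, hba⟩
    exact sub_ne_add_sub_of_mem_signedFiber hA hπ ha₀ ha hb hba
  calc #(signedFiber π A y) + #(signedFiber π A (2 • y))
      = #(U ∪ (signedFiber π A (2 • y)).image ε) := by rw [card_union_of_disjoint hdisj, hU, hcard]
    _ ≤ #(twoTorsion G) := card_le_card (union_subset hUsub (himage _))

end SignedFiber

lemma sum_card_signedFiber {A : Finset G} {π : G → G} (s : Finset G) (hs : ∀ y ∈ s, -y ∈ s)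
    (hmaps : Set.MapsTo π A s) (hne : ∀ a ∈ A, π a ≠ -π a) :
    ∑ y ∈ s, #(signedFiber π A y) = 2 * #A := by
  have hsplit (y : G) : #(signedFiber π A y) = #{a ∈ A | π a = y} + #{a ∈ A | π a = -y} := by
    rw [signedFiber, filter_or, card_union_of_disjoint]
    exact disjoint_filter.2 fun a ha h₁ h₂ => hne a ha (h₂.trans (congrArg Neg.neg h₁.symm))
  have hneg : ∑ y ∈ s, #{a ∈ A | π a = -y} = ∑ y ∈ s, #{a ∈ A | π a = y} :=
    sum_nbij' Neg.neg Neg.neg hs hs (by simp) (by simp) (by simp)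
  rw [sum_congr rfl fun y _ => hsplit y, sum_add_distrib, hneg,
    ← card_eq_sum_card_fiberwise hmaps]
  ring

section Counting

variable [Fintype G] {m : ℕ}

lemma card_twoTorsion_mul_card (hm : Odd m) (hexp : ∀ x : G, (2 * m) • x = 0) :
    #(twoTorsion G) * #{x : G | m • x = 0} = Fintype.card G := by
  rw [← card_product, ← card_univ]
  refine card_bij' (fun p _ => p.1 + p.2) (fun x _ => (m • x, (m + 1) • x))
    (fun _ _ => mem_univ _) (fun x _ => ?_) (fun p hp => ?_) (fun x _ => ?_)
  · simp only [twoTorsion, mem_product, mem_filter, mem_univ, true_and]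
    exact ⟨by rw [← mul_nsmul', hexp], nsmul_succ_nsmul_eq_zero hm hexp x⟩
  · simp only [twoTorsion, mem_product, mem_filter, mem_univ, true_and] at hp
    obtain ⟨he, hh⟩ := hp
    simp only [nsmul_add, succ_nsmul, hm.nsmul_eq_self he, hh, add_zero]
    rw [← add_assoc, ← two_nsmul, he, zero_add]
  · rw [← add_nsmul, show m + (m + 1) = 2 * m + 1 by ring, succ_nsmul, hexp, zero_add]

lemma sum_comp_two_nsmul (hm : Odd m) (f : G → ℕ) :
    ∑ y ∈ ({y : G | m • y = 0} : Finset G).erase 0, f (2 • y) =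
      ∑ y ∈ ({y : G | m • y = 0} : Finset G).erase 0, f y := by
  obtain ⟨k, rfl⟩ := hm
  have hhalf {y : G} (hy : (2 * k + 1) • y = 0) : 2 • (k + 1) • y = y := by
    rw [smul_smul, show 2 * (k + 1) = 2 * k + 1 + 1 by ring, succ_nsmul, hy, zero_add]
  refine sum_nbij' (2 • ·) ((k + 1) • ·) (fun y hy => ?_) (fun y hy => ?_) (fun y hy => ?_)
    (fun y hy => ?_) (fun _ _ => rfl)
  all_goals simp only [mem_erase, mem_filter, mem_univ, true_and] at hy ⊢
  · refine ⟨fun h => hy.1 ?_, by rw [smul_comm, hy.2, nsmul_zero]⟩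
    rw [← hhalf hy.2, smul_comm, h, nsmul_zero]
  · refine ⟨fun h => hy.1 ?_, by rw [smul_comm, hy.2, nsmul_zero]⟩
    rw [← hhalf hy.2, h, nsmul_zero]
  · rw [smul_comm, hhalf hy.2]
  · exact hhalf hy.2

theorem four_mul_card_add_card_twoTorsion_le {A : Finset G} (hA : IsTIndep 3 A) (hm : Odd m)
    (hexp : ∀ x : G, (2 * m) • x = 0) : 4 * #A + #(twoTorsion G) ≤ Fintype.card G := by
  set π : G → G := fun x => (m + 1) • x
  set H₀ : Finset G := ({y : G | m • y = 0} : Finset G).erase 0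
  have hπ : ∀ x, 2 • (x - π x) = 0 := two_nsmul_sub_succ_nsmul hexp
  have hπ_ne_zero : ∀ a ∈ A, π a ≠ 0 := fun a ha h => by
    apply hA.add_ne_zero (by norm_num) ha ha
    simpa [h, two_nsmul] using hπ a
  have hπ_ne_neg : ∀ a ∈ A, π a ≠ -π a := fun a ha h => by
    apply hπ_ne_zero a ha
    rw [← hm.nsmul_eq_self (x := π a) (by rw [two_nsmul]; nth_rw 1 [h]; exact neg_add_cancel _)]
    exact nsmul_succ_nsmul_eq_zero hm hexp a
  have hsum : ∑ y ∈ H₀, #(signedFiber π A y) = 2 * #A := by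
    refine sum_card_signedFiber H₀ (fun y hy => ?_) (fun a ha => ?_) hπ_ne_neg
    · simp only [H₀, mem_erase, mem_filter, mem_univ, true_and] at hy ⊢
      exact ⟨neg_ne_zero.2 hy.1, by rw [smul_neg, hy.2, neg_zero]⟩
    · simp only [H₀, coe_erase, coe_filter, mem_univ, true_and]
      exact ⟨nsmul_succ_nsmul_eq_zero hm hexp a, hπ_ne_zero a ha⟩
  have hcard : #(twoTorsion G) * (#H₀ + 1) = Fintype.card G := by
    rw [card_erase_add_one (by simp), card_twoTorsion_mul_card hm hexp]
  calc 4 * #A + #(twoTorsion G)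
      = ∑ y ∈ H₀, (#(signedFiber π A y) + #(signedFiber π A (2 • y))) + #(twoTorsion G) := by
        rw [sum_add_distrib, sum_comp_two_nsmul hm (fun y => #(signedFiber π A y)), hsum]; ring
    _ ≤ ∑ _y ∈ H₀, #(twoTorsion G) + #(twoTorsion G) := by
        gcongr with y
        exact card_signedFiber_add_card_signedFiber_two_nsmul_le hA hπ y
    _ = Fintype.card G := by rw [sum_const, smul_eq_mul, ← hcard]; ring

end Counting

end

theorem stmt9_general {G : Type*} [AddCommGroup G] [Fintype G]
    (hκ : AddMonoid.exponent G % 4 = 2) :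
    ∀ A : Finset G, IsTIndep 3 A →
      (A.card : ℚ) ≤
        ((Fintype.card G : ℚ) - (Nat.card {x : G // 2 • x = 0} : ℚ)) / 4 := by
  classical
  intro A hA
  have hexp : ∀ x : G, (2 * (AddMonoid.exponent G / 2)) • x = 0 := fun x => by
    rw [show 2 * (AddMonoid.exponent G / 2) = AddMonoid.exponent G by omega]
    exact AddMonoid.exponent_nsmul_eq_zero x
  have hle := four_mul_card_add_card_twoTorsion_le hA ⟨AddMonoid.exponent G / 4, by omega⟩ hexp
  have htwo : Nat.card {x : G // 2 • x = 0} = (twoTorsion G).card := by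
    rw [Nat.card_eq_fintype_card, Fintype.card_subtype, twoTorsion]
  rw [htwo, le_div_iff₀ (by norm_num)]
  have hleℚ : (4 * A.card + (twoTorsion G).card : ℚ) ≤ Fintype.card G := by exact_mod_cast hle
  linarith

theorem stmt9 {G : Type*} [AddCommGroup G] [Fintype G]
    (hn : 2 ≤ Fintype.card G)
    (hκ : AddMonoid.exponent G % 4 = 2) :
    ∀ A : Finset G, IsTIndep 3 A →
      (A.card : ℚ) ≤
        ((Fintype.card G : ℚ) - (Nat.card {x : G // 2 • x = 0} : ℚ)) / 4 :=
  stmt9_general hκ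
end

section
/- Let G be a finite abelian group of order n whose exponent κ is divisible by 4. Then G contains a 3-independent set of size n/4. -/
/-!
By the structure theorem, `4 ∣ exp G` yields a surjection `φ : G →+ ZMod 4`; take
`A = φ⁻¹(1)`, a coset of `ker φ`. Applying `φ` to a relation `∑ cₓ x = 0` of weight
`∑ |cₓ| ≤ 3` gives `4 ∣ ∑ cₓ`, hence `∑ cₓ = 0`. The weight is then even, so at most `2`,
and the only nontrivial relation of that kind would be `x - y = 0` with `x ≠ y`.
-/

open Finset

theorem Nat.dvd_div_of_prime_pow_dvd_of_not_dvd {p k a b : ℕ} (hp : p.Prime) (hab : a ∣ b)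
    (hpb : p ^ k ∣ b) (hpa : ¬p ^ k ∣ a) : a ∣ b / p := by
  obtain ⟨c, rfl⟩ := hab
  obtain ⟨d, rfl⟩ : p ∣ c := by
    by_contra hpc
    exact hpa ((((hp.coprime_iff_not_dvd.2 hpc).pow_left k).dvd_of_dvd_mul_right hpb))
  exact ⟨d, by rw [mul_left_comm, Nat.mul_div_cancel_left _ hp.pos]⟩

theorem Nat.exists_prime_pow_dvd_of_prime_pow_dvd_lcm {ι : Type*} {s : Finset ι} {f : ι → ℕ}
    {p k : ℕ} (hp : p.Prime) (hk : k ≠ 0) (h : p ^ k ∣ s.lcm f) : ∃ i ∈ s, p ^ k ∣ f i := by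
  by_contra! hs
  have hlcm : s.lcm f ∣ s.lcm f / p :=
    Finset.lcm_dvd fun i hi => dvd_div_of_prime_pow_dvd_of_not_dvd hp (dvd_lcm hi) h (hs i hi)
  obtain ⟨q, hq⟩ : p ∣ s.lcm f := (dvd_pow_self p hk).trans h
  have hq0 : q ≠ 0 := by
    rintro rfl
    obtain ⟨i, hi, hfi⟩ := Finset.lcm_eq_zero_iff.1 (hq.trans (mul_zero p))
    exact hs i hi (hfi ▸ dvd_zero _)
  rw [hq, Nat.mul_div_cancel_left _ hp.pos] at hlcm
  have := Nat.le_of_dvd (Nat.pos_of_ne_zero hq0) hlcm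
  nlinarith [hp.two_le, Nat.pos_of_ne_zero hq0]

theorem AddCommGroup.exists_surjective_zmod_of_prime_pow_dvd_exponent {G : Type*}
    [AddCommGroup G] [Finite G] {p k : ℕ} (hp : p.Prime) (hk : k ≠ 0)
    (h : p ^ k ∣ AddMonoid.exponent G) : ∃ φ : G →+ ZMod (p ^ k), Function.Surjective φ := by
  obtain ⟨ι, _, n, -, ⟨e⟩⟩ := AddCommGroup.equiv_directSum_zmod_of_finite' G
  let e' := e.trans (DirectSum.addEquivProd _)
  have hexp : AddMonoid.exponent G = univ.lcm n := by
    simp only [AddMonoid.exponent_eq_of_addEquiv e', AddMonoid.exponent_pi, ZMod.exponent]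
  obtain ⟨i, -, hi⟩ := Nat.exists_prime_pow_dvd_of_prime_pow_dvd_lcm hp hk (hexp ▸ h)
  refine ⟨((ZMod.castHom hi _).toAddMonoidHom.comp (Pi.evalAddMonoidHom _ i)).comp
    e'.toAddMonoidHom, ?_⟩
  exact (ZMod.castHom_surjective hi).comp ((Function.surjective_eval i).comp e'.surjective)

theorem AddMonoidHom.card_fiber_mul_card {G H : Type*} [AddGroup G] [Fintype G] [AddMonoid H]
    [Fintype H] [DecidableEq H] (φ : G →+ H) (hφ : Function.Surjective φ) (h : H) :
    #{x | φ x = h} * Fintype.card H = Fintype.card G := by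
  calc #{x | φ x = h} * Fintype.card H = ∑ _y : H, #{x | φ x = h} := by
        rw [sum_const, card_univ, smul_eq_mul, mul_comm]
    _ = ∑ y : H, #{x | φ x = y} :=
        sum_congr rfl fun y _ => AddMonoidHom.card_fiber_eq_of_mem_range φ (hφ h) (hφ y)
    _ = Fintype.card G := by
        rw [← card_univ, card_eq_sum_card_fiberwise fun x _ => mem_univ (φ x)]

theorem sum_eq_zero_of_forall_map_eq_one {G : Type*} [AddCommGroup G] {m : ℕ} (φ : G →+ ZMod m)
    {A : Finset G} (hA : ∀ x ∈ A, φ x = 1) {c : G → ℤ} (habs : ∑ x ∈ A, |c x| < m)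
    (hrel : ∑ x ∈ A, c x • x = 0) : ∑ x ∈ A, c x = 0 := by
  have hdvd : (m : ℤ) ∣ ∑ x ∈ A, c x := by
    rw [← ZMod.intCast_zmod_eq_zero_iff_dvd, Int.cast_sum]
    have := congrArg φ hrel
    rwa [map_sum, map_zero, sum_congr rfl fun x hx => by rw [map_zsmul, hA x hx, zsmul_one]] at this
  exact Int.eq_zero_of_abs_lt_dvd hdvd ((abs_sum_le_sum_abs _ _).trans_lt habs)

theorem eq_zero_of_sum_eq_zero_of_sum_abs_le_two {G : Type*} [AddCommGroup G] {A : Finset G}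
    {c : G → ℤ} (hsum : ∑ x ∈ A, c x = 0) (habs : ∑ x ∈ A, |c x| ≤ 2)
    (hrel : ∑ x ∈ A, c x • x = 0) : ∀ x ∈ A, c x = 0 := by
  set T := {x ∈ A | c x ≠ 0}
  suffices hT : T = ∅ from fun x hx => not_not.1 (filter_eq_empty_iff.1 hT hx)
  replace hsum : ∑ x ∈ T, c x = 0 := (sum_filter_ne_zero (f := c) A).trans hsum
  replace habs : ∑ x ∈ T, |c x| ≤ 2 :=
    (sum_filter_of_ne fun _ _ => abs_ne_zero.1).trans_le habs
  replace hrel : ∑ x ∈ T, c x • x = 0 :=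
    (sum_filter_of_ne fun _ _ => left_ne_zero_of_smul).trans hrel
  have hcT : ∀ x ∈ T, c x ≠ 0 := fun x hx => (mem_filter.1 hx).2
  have hcard : #T ≤ 2 := by
    have : #T • (1 : ℤ) ≤ ∑ x ∈ T, |c x| :=
      card_nsmul_le_sum _ _ _ fun x hx => Int.one_le_abs (hcT x hx)
    rw [nsmul_one] at this
    omega
  clear_value T
  classical
  obtain h | h | h : #T = 0 ∨ #T = 1 ∨ #T = 2 := by omega
  · exact card_eq_zero.1 h
  · obtain ⟨a, rfl⟩ := card_eq_one.1 h
    rw [sum_singleton] at hsum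
    exact absurd hsum (hcT a (mem_singleton_self a))
  · obtain ⟨a, b, hab, rfl⟩ := card_eq_two.1 h
    rw [sum_pair hab] at hsum habs hrel
    have hca := hcT a (mem_insert_self a {b})
    rw [show c b = -c a by omega, neg_smul, ← sub_eq_add_neg, ← smul_sub] at hrel
    rw [show c b = -c a by omega, abs_neg] at habs
    have hunit : IsUnit (c a) := Int.isUnit_iff_abs_eq.2 (by have := Int.one_le_abs hca; omega)
    exact absurd (sub_eq_zero.1 (hunit.smul_eq_zero.1 hrel)) hab

-- `|c x| ≡ c x (mod 2)`, so a relation with coefficient sum zero has even weight.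
theorem eq_zero_of_sum_eq_zero_of_sum_abs_le_three {G : Type*} [AddCommGroup G] {A : Finset G}
    {c : G → ℤ} (hsum : ∑ x ∈ A, c x = 0) (habs : ∑ x ∈ A, |c x| ≤ 3)
    (hrel : ∑ x ∈ A, c x • x = 0) : ∀ x ∈ A, c x = 0 := by
  obtain ⟨r, hr⟩ : Even (∑ x ∈ A, |c x|) := by
    rw [← sub_zero (∑ x ∈ A, |c x|), ← hsum, ← sum_sub_distrib]
    exact even_sum _ fun x _ => Int.even_sub.2 even_abs
  exact eq_zero_of_sum_eq_zero_of_sum_abs_le_two hsum (by omega) hrel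

theorem isTIndep_three_of_forall_map_eq_one {G : Type*} [AddCommGroup G] {m : ℕ}
    (φ : G →+ ZMod m) (hm : 4 ≤ m) {A : Finset G} (hA : ∀ x ∈ A, φ x = 1) : IsTIndep 3 A := by
  intro c hc habs hrel x
  by_cases hx : x ∈ A
  · exact eq_zero_of_sum_eq_zero_of_sum_abs_le_three
      (sum_eq_zero_of_forall_map_eq_one φ hA (by omega) hrel) habs hrel x hx
  · exact hc x hx

theorem stmt10 {G : Type*} [AddCommGroup G] [Fintype G]
    (hκ : 4 ∣ AddMonoid.exponent G) :
    ∃ A : Finset G, IsTIndep 3 A ∧ 4 * A.card = Fintype.card G := by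
  classical
  obtain ⟨φ, hφ⟩ := AddCommGroup.exists_surjective_zmod_of_prime_pow_dvd_exponent
    Nat.prime_two two_ne_zero (k := 2) hκ
  refine ⟨univ.filter (φ · = 1),
    isTIndep_three_of_forall_map_eq_one φ le_rfl fun x hx => (mem_filter.1 hx).2, ?_⟩
  rw [← φ.card_fiber_mul_card hφ 1, ZMod.card, mul_comm]
  rfl
end

section
/- Let G be a finite abelian group of order n with exponent κ, and let d be an odd positive integer dividing κ. Then G contains a 3-independent set of size ⌊(d+1)/6⌋·(n/d). -/
/-!
Since `d` divides the exponent, `G` maps onto `ZMod d`. There the set `B = {m, …, 2m - 1}`,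
`m = ⌊(d + 1) / 6⌋`, is 3-independent: a relation of weight at most 3 lifts to an integer of
absolute value at most `3 (2m - 1) < d` that is divisible by `d`, hence to an exact relation among
integers in `[m, 2m)`, and there is none. The preimage `A` of `B` has `m · (n / d)` elements and is
3-independent as well: pushing a relation on `A` forward to `B` shows that its coefficients sum to
zero, and a relation of weight at most 3 with coefficient sum zero could only read `u - v = 0`.
-/

open Finset Function

theorem isTIndep_iff {G : Type*} [AddCommGroup G] {t : ℕ} {A : Finset G} :
    IsTIndep t A ↔
      ∀ c : G → ℤ, ∑ x ∈ A, |c x| ≤ t → ∑ x ∈ A, c x • x = 0 → ∀ x ∈ A, c x = 0 := by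
  classical
  refine ⟨fun h c hw hz x hx ↦ ?_, fun h c hc hw hz x ↦ ?_⟩
  · set c' : G → ℤ := fun y ↦ if y ∈ A then c y else 0
    have hc' : ∀ y ∈ A, c' y = c y := fun y hy ↦ if_pos hy
    have := h c' (fun y hy ↦ if_neg hy) (by rwa [sum_congr rfl fun y hy ↦ by rw [hc' y hy]])
      (by rwa [sum_congr rfl fun y hy ↦ by rw [hc' y hy]]) x
    rwa [hc' x hx] at this
  · by_cases hx : x ∈ A
    exacts [h c hw hz x hx, hc x hx]

theorem eq_zero_of_sum_eq_zero_of_sum_zsmul_eq_zero {G : Type*} [AddCommGroup G]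
    {A : Finset G} {c : G → ℤ} (hw : ∑ x ∈ A, |c x| ≤ 3) (hsum : ∑ x ∈ A, c x = 0)
    (hz : ∑ x ∈ A, c x • x = 0) : ∀ x ∈ A, c x = 0 := by
  classical
  set s := {x ∈ A | c x ≠ 0}
  have hs : ∀ x ∈ s, c x ≠ 0 := fun x hx ↦ (mem_filter.1 hx).2
  replace hw : ∑ x ∈ s, |c x| ≤ 3 := by rwa [sum_filter_of_ne fun x _ h ↦ abs_ne_zero.1 h]
  replace hsum : ∑ x ∈ s, c x = 0 := by rwa [sum_filter_of_ne fun x _ h ↦ h]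
  replace hz : ∑ x ∈ s, c x • x = 0 := by
    rwa [sum_filter_of_ne fun x _ h h0 ↦ by simp [h0] at h]
  have hcard : #s ≤ 3 := by
    have : (#s : ℤ) ≤ ∑ x ∈ s, |c x| := by
      simpa using sum_le_sum fun x hx ↦ Int.one_le_abs (hs x hx)
    omega
  suffices s = ∅ from fun x hx ↦ not_not.1 (filter_eq_empty_iff.1 this hx)
  obtain h | h | h | h : #s = 0 ∨ #s = 1 ∨ #s = 2 ∨ #s = 3 := by omega
  · exact card_eq_zero.1 h
  · obtain ⟨u, hu⟩ := card_eq_one.1 h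
    simp only [hu, sum_singleton] at hsum
    exact absurd hsum (hs u (by simp [hu]))
  · obtain ⟨u, v, huv, hu⟩ := card_eq_two.1 h
    simp only [hu, sum_pair huv] at hw hsum hz
    have hv : c v = -c u := by omega
    have hu1 : c u = 1 ∨ c u = -1 := by
      have := hs u (by simp [hu])
      rw [hv, abs_neg] at hw
      rcases abs_cases (c u) <;> omega
    rw [hv, neg_smul, ← sub_eq_add_neg, ← smul_sub] at hz
    rcases hu1 with h1 | h1 <;> simp only [h1, one_smul, neg_one_smul, neg_eq_zero,
      sub_eq_zero] at hz <;> exact absurd hz huv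
  · obtain ⟨u, v, w, huv, huw, hvw, hu⟩ := card_eq_three.1 h
    simp only [hu, sum_insert (show u ∉ {v, w} by simp [huv, huw]), sum_pair hvw] at hw hsum
    have := hs u (by simp [hu]); have := hs v (by simp [hu]); have := hs w (by simp [hu])
    rcases abs_cases (c u) <;> rcases abs_cases (c v) <;> rcases abs_cases (c w) <;> omega

theorem Int.isTIndep_three_Ico (m : ℤ) : IsTIndep 3 (Ico m (2 * m)) := by
  rw [isTIndep_iff]
  intro c hw hz
  simp only [smul_eq_mul, Nat.cast_ofNat] at hw hz
  -- With `P`, `N` the positive and negative weights of `c`, both sides of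
  -- `∑ c⁺ x * x = ∑ c⁻ x * x` lie in `[m P, (2m - 1) P]` resp. `[m N, (2m - 1) N]`;
  -- as `P + N ≤ 3`, this forces `P = N`.
  have bounds : ∀ f : ℤ → ℤ, (∀ x, 0 ≤ f x) →
      m * ∑ x ∈ Ico m (2 * m), f x ≤ ∑ x ∈ Ico m (2 * m), f x * x ∧
        ∑ x ∈ Ico m (2 * m), f x * x ≤ (2 * m - 1) * ∑ x ∈ Ico m (2 * m), f x := by
    intro f hf
    rw [mul_sum, mul_sum]
    constructor <;> refine sum_le_sum fun x hx ↦ ?_ <;> rw [mem_Ico] at hx <;> nlinarith [hf x]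
  obtain ⟨hP₁, hP₂⟩ := bounds (fun x ↦ (c x)⁺) fun x ↦ posPart_nonneg _
  obtain ⟨hN₁, hN₂⟩ := bounds (fun x ↦ (c x)⁻) fun x ↦ negPart_nonneg _
  have hS : ∑ x ∈ Ico m (2 * m), (c x)⁺ * x = ∑ x ∈ Ico m (2 * m), (c x)⁻ * x := by
    rw [← sub_eq_zero, ← sum_sub_distrib, ← hz]
    simp only [← sub_mul, posPart_sub_negPart]
  have hW : ∑ x ∈ Ico m (2 * m), (c x)⁺ + ∑ x ∈ Ico m (2 * m), (c x)⁻ ≤ 3 := by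
    simpa only [← sum_add_distrib, posPart_add_negPart] using hw
  have hP := sum_nonneg fun x (_ : x ∈ Ico m (2 * m)) ↦ posPart_nonneg (c x)
  have hN := sum_nonneg fun x (_ : x ∈ Ico m (2 * m)) ↦ negPart_nonneg (c x)
  have hsum : ∑ x ∈ Ico m (2 * m), c x = 0 := by
    rw [← sum_congr rfl fun x _ ↦ posPart_sub_negPart (c x), sum_sub_distrib]
    generalize ∑ x ∈ Ico m (2 * m), (c x)⁺ = P at *
    generalize ∑ x ∈ Ico m (2 * m), (c x)⁻ = N at *
    have : P ≤ 3 := by omega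
    have : N ≤ 3 := by omega
    interval_cases P <;> interval_cases N <;> omega
  exact eq_zero_of_sum_eq_zero_of_sum_zsmul_eq_zero hw hsum (by simpa using hz)

theorem injOn_zsmul_Ico {H : Type*} [AddGroup H] (g : H) {a b : ℤ}
    (hab : b - a ≤ addOrderOf g) : Set.InjOn (· • g) (Set.Ico a b) := by
  intro k hk l hl hkl
  have hdvd : (addOrderOf g : ℤ) ∣ l - k := (zsmul_eq_zsmul_iff_modEq.1 hkl).dvd
  have hlt : |l - k| < addOrderOf g := by
    rw [abs_lt]
    simp only [Set.mem_Ico] at hk hl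
    omega
  linarith [Int.eq_zero_of_abs_lt_dvd hdvd hlt]

theorem card_image_zsmul_Ico {H : Type*} [AddGroup H] [DecidableEq H] (g : H) {a b : ℤ}
    (hab : b - a ≤ addOrderOf g) : #((Ico a b).image (· • g)) = (b - a).toNat := by
  rw [card_image_of_injOn (by simpa using injOn_zsmul_Ico g hab), Int.card_Ico]

theorem isTIndep_three_image_zsmul_Ico {H : Type*} [AddCommGroup H] [DecidableEq H] {g : H}
    {m : ℤ} (hm : 6 * m ≤ addOrderOf g + 1) : IsTIndep 3 ((Ico m (2 * m)).image (· • g)) := by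
  rw [isTIndep_iff]
  intro c hw hz
  rw [forall_mem_image]
  rcases le_or_gt m 0 with hm0 | hm0
  · intro k hk
    rw [mem_Ico] at hk
    omega
  have hinj : Set.InjOn (· • g) (Ico m (2 * m) : Set ℤ) := by
    simpa using injOn_zsmul_Ico g (a := m) (b := 2 * m) (by omega)
  rw [sum_image hinj] at hw hz
  set S := ∑ k ∈ Ico m (2 * m), c (k • g) * k
  have hSg : S • g = 0 := by simpa [S, sum_smul, mul_smul] using hz
  have hS : |S| < addOrderOf g := calc
    |S| ≤ ∑ k ∈ Ico m (2 * m), |c (k • g)| * (2 * m - 1) := by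
      refine (abs_sum_le_sum_abs _ _).trans (sum_le_sum fun k hk ↦ ?_)
      rw [mem_Ico] at hk
      rw [abs_mul, abs_of_pos (by omega : 0 < k)]
      exact mul_le_mul_of_nonneg_left (by omega) (abs_nonneg _)
    _ ≤ 3 * (2 * m - 1) := by rw [← sum_mul]; exact mul_le_mul_of_nonneg_right hw (by omega)
    _ < addOrderOf g := by omega
  have hS0 : S = 0 := Int.eq_zero_of_abs_lt_dvd (addOrderOf_dvd_iff_zsmul_eq_zero.2 hSg) hS
  exact isTIndep_iff.1 (Int.isTIndep_three_Ico m) (fun k ↦ c (k • g)) hw (by simpa using hS0)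

theorem IsTIndep.preimage {G H : Type*} [AddCommGroup G] [AddCommGroup H] [Fintype G]
    [DecidableEq H] {t : ℕ} {B : Finset H} (hB : IsTIndep t B) (ht : t ≤ 3) (φ : G →+ H) :
    IsTIndep t ({x | φ x ∈ B} : Finset G) := by
  rw [isTIndep_iff] at hB ⊢
  set A : Finset G := {x | φ x ∈ B}
  have hmaps : ∀ x ∈ A, φ x ∈ B := fun x hx ↦ (mem_filter.1 hx).2
  intro c hw hz
  -- the pushforward of `c` is a relation of weight at most `t` on `B`
  have hpush : ∀ b ∈ B, ∑ x ∈ A with φ x = b, c x = 0 := by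
    refine hB _ ?_ ?_
    · calc ∑ b ∈ B, |∑ x ∈ A with φ x = b, c x|
          ≤ ∑ b ∈ B, ∑ x ∈ A with φ x = b, |c x| := sum_le_sum fun b _ ↦ abs_sum_le_sum_abs _ _
        _ = ∑ x ∈ A, |c x| := sum_fiberwise_of_maps_to hmaps _
        _ ≤ t := hw
    · calc ∑ b ∈ B, (∑ x ∈ A with φ x = b, c x) • b
          = ∑ b ∈ B, ∑ x ∈ A with φ x = b, c x • φ x := by
            refine sum_congr rfl fun b _ ↦ ?_
            rw [sum_smul]
            exact sum_congr rfl fun x hx ↦ by rw [(mem_filter.1 hx).2]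
        _ = φ (∑ x ∈ A, c x • x) := by
            rw [sum_fiberwise_of_maps_to hmaps, map_sum]
            simp only [map_zsmul]
        _ = 0 := by rw [hz, map_zero]
  have hsum : ∑ x ∈ A, c x = 0 := by
    rw [← sum_fiberwise_of_maps_to hmaps]
    exact sum_eq_zero hpush
  exact eq_zero_of_sum_eq_zero_of_sum_zsmul_eq_zero (hw.trans (by exact_mod_cast ht)) hsum hz

theorem card_filter_mem_of_surjective {G H : Type*} [AddGroup G] [Fintype G] [AddGroup H]
    [Fintype H] [DecidableEq H] {φ : G →+ H} (hφ : Surjective φ) (B : Finset H) :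
    #({x | φ x ∈ B} : Finset G) = #B * (Fintype.card G / Fintype.card H) := by
  have hfiber : ∀ b, #({x | φ x = b} : Finset G) = #({x | φ x = 0} : Finset G) :=
    fun b ↦ AddMonoidHom.card_fiber_eq_of_mem_range φ (hφ b) (hφ 0)
  have hcard : Fintype.card G = Fintype.card H * #({x | φ x = 0} : Finset G) := by
    rw [← card_univ, card_eq_sum_card_fiberwise (t := univ) (f := φ) fun _ _ ↦ mem_univ _]
    simp [hfiber]
  rw [hcard, Nat.mul_div_cancel_left _ Fintype.card_pos,
    card_eq_sum_card_fiberwise (s := {x | φ x ∈ B}) (t := B) (f := φ)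
      fun x hx ↦ (mem_filter.1 (mem_coe.1 hx)).2]
  rw [sum_const_nat fun b hb ↦ ?_]
  rw [filter_filter, ← hfiber b]
  congr 1
  ext x
  simp only [mem_filter, mem_univ, true_and, and_iff_right_iff_imp]
  rintro rfl
  exact hb

namespace AddCommGroup

variable {G : Type*} [AddCommGroup G]

theorem exists_surjective_zmod_mul {a b : ℕ} (hab : a.Coprime b)
    (ha : ∃ φ : G →+ ZMod a, Surjective φ) (hb : ∃ ψ : G →+ ZMod b, Surjective ψ) :
    ∃ χ : G →+ ZMod (a * b), Surjective χ := by
  obtain ⟨φ, hφ⟩ := ha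
  obtain ⟨ψ, hψ⟩ := hb
  obtain ⟨u, v, huv⟩ := Nat.isCoprime_iff_coprime.2 hab
  let crt := (ZMod.chineseRemainder hab).symm
  refine ⟨crt.toAddEquiv.toAddMonoidHom.comp (φ.prod ψ), crt.surjective.comp ?_⟩
  rintro ⟨x, y⟩
  obtain ⟨g, rfl⟩ := hφ x
  obtain ⟨h, rfl⟩ := hψ y
  have hva : (v : ZMod a) * b = 1 := by simpa using congrArg (Int.cast : ℤ → ZMod a) huv
  have hub : (u : ZMod b) * a = 1 := by simpa using congrArg (Int.cast : ℤ → ZMod b) huv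
  refine ⟨(v * b) • g + (u * a) • h, ?_⟩
  ext <;> simp [zsmul_eq_mul, hva, hub]

theorem exists_surjective_zmod_prime_pow [Finite G] {p k : ℕ} (hp : p.Prime) (hk : 0 < k)
    (h : p ^ k ∣ AddMonoid.exponent G) : ∃ φ : G →+ ZMod (p ^ k), Surjective φ := by
  classical
  obtain ⟨ι, _, n, hn, ⟨e⟩⟩ := equiv_directSum_zmod_of_finite' G
  have hn0 : ∀ i ∈ univ, n i ≠ 0 := fun i _ ↦ by have := hn i; omega
  have hexp : AddMonoid.exponent G = univ.lcm n := by
    rw [AddMonoid.exponent_eq_of_addEquiv (e.trans (DirectSum.addEquivProd _)),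
      AddMonoid.exponent_pi]
    simp only [ZMod.exponent]
  rw [hexp, hp.pow_dvd_iff_le_factorization (by simpa [Finset.lcm_eq_zero_iff] using hn0),
    factorization_lcm hn0, Finset.le_sup_iff hk] at h
  obtain ⟨i, -, hi⟩ := h
  have hdvd : p ^ k ∣ n i := (hp.pow_dvd_iff_le_factorization (hn0 i (mem_univ i))).2 hi
  have hcomp : Surjective (DirectSum.component ℤ ι (fun i ↦ ZMod (n i)) i) :=
    fun y ↦ ⟨DirectSum.lof ℤ ι (fun i ↦ ZMod (n i)) i y, DirectSum.component.lof_self ..⟩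
  exact ⟨(ZMod.castHom hdvd _).toAddMonoidHom.comp
    ((DirectSum.component ℤ ι _ i).toAddMonoidHom.comp e.toAddMonoidHom),
    (ZMod.castHom_surjective hdvd).comp (hcomp.comp e.surjective)⟩

theorem exists_surjective_zmod_of_dvd_exponent [Finite G] {d : ℕ}
    (hd : d ∣ AddMonoid.exponent G) : ∃ φ : G →+ ZMod d, Surjective φ := by
  induction d using Nat.recOnPosPrimePosCoprime with
  | prime_pow p k hp hk => exact exists_surjective_zmod_prime_pow hp hk hd
  | zero => exact absurd (zero_dvd_iff.1 hd) AddMonoid.exponent_ne_zero_of_finite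
  | one => exact ⟨0, fun y ↦ ⟨0, Subsingleton.elim _ _⟩⟩
  | coprime a b _ _ hab iha ihb =>
    exact exists_surjective_zmod_mul hab (iha (dvd_of_mul_right_dvd hd))
      (ihb (dvd_of_mul_left_dvd hd))

end AddCommGroup

theorem stmt12_general {G : Type*} [AddCommGroup G] [Fintype G]
    (d : ℕ) (hdiv : d ∣ AddMonoid.exponent G) :
    ∃ A : Finset G, IsTIndep 3 A ∧
      A.card = (d + 1) / 6 * (Fintype.card G / d) := by
  classical
  obtain ⟨φ, hφ⟩ := AddCommGroup.exists_surjective_zmod_of_dvd_exponent hdiv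
  have : NeZero d := ⟨fun h ↦ AddMonoid.exponent_ne_zero_of_finite (zero_dvd_iff.1 (h ▸ hdiv))⟩
  obtain ⟨m, hm⟩ : ∃ m, (d + 1) / 6 = m := ⟨_, rfl⟩
  have hm6 : 6 * (m : ℤ) ≤ addOrderOf (1 : ZMod d) + 1 := by rw [ZMod.addOrderOf_one]; omega
  refine ⟨({x | φ x ∈ (Ico (m : ℤ) (2 * m)).image (· • (1 : ZMod d))} : Finset G),
    (isTIndep_three_image_zsmul_Ico hm6).preimage le_rfl φ, ?_⟩
  rw [card_filter_mem_of_surjective hφ, card_image_zsmul_Ico _ (by omega), ZMod.card, hm]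
  congr 1
  omega

theorem stmt12 {G : Type*} [AddCommGroup G] [Fintype G]
    (d : ℕ) (hd : Odd d) (hd0 : 0 < d) (hdiv : d ∣ AddMonoid.exponent G) :
    ∃ A : Finset G, IsTIndep 3 A ∧
      A.card = (d + 1) / 6 * (Fintype.card G / d) :=
  stmt12_general d hdiv
end

section
/- Let n and t be integers with 3 ≤ t ≤ n-1, set N = ⌊⌊n/t⌋ / ⌊(t+1)/2⌋⌋, and suppose B is a B_{⌊t/2⌋}-sequence contained in the interval of integers [1, N]. Then the set A = {⌊n/t⌋ - b : b ∈ B}, viewed as a subset of the cyclic group Z_n, is t-independent in Z_n. -/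
/-- A set `B` of natural numbers is a `B_h`-sequence if all `h`-term sums of (not
necessarily distinct) elements of `B` are distinct up to the order of the terms. -/
def IsBhSeq (h : ℕ) (B : Finset ℕ) : Prop :=
  ∀ f g : Multiset ℕ, (∀ x ∈ f, x ∈ B) → (∀ x ∈ g, x ∈ B) →
    Multiset.card f = h → Multiset.card g = h → f.sum = g.sum → f = g

open Finset

theorem Multiset.sum_map_sum_replicate {ι M : Type*} [AddCommMonoid M] (B : Finset ι)
    (m : ι → ℕ) (φ : ι → M) :
    ((∑ b ∈ B, replicate (m b) b).map φ).sum = ∑ b ∈ B, m b • φ b := by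
  rw [← coe_mapAddMonoidHom, map_sum, ← coe_sumAddMonoidHom, map_sum]
  simp

theorem Multiset.sum_map_tsub_add_sum {F : Multiset ℕ} {k : ℕ} (hF : ∀ b ∈ F, b ≤ k) :
    (F.map (k - ·)).sum + F.sum = card F * k := by
  have hsub : (F.map (k - ·)).sum = card F * k - F.sum := by
    simpa using sum_map_tsub F (f := fun _ => k) (g := id) hF
  have hle : F.sum ≤ card F * k := by simpa using sum_le_card_nsmul F k hF
  omega

theorem isTIndep_image_of_forall_sum_map_eq {ι G : Type*} [DecidableEq ι] [AddCommGroup G]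
    [DecidableEq G] {t : ℕ} (ht : 2 ≤ t) {B : Finset ι} {φ : ι → G}
    (hφ : ∀ F F' : Multiset ι, (∀ b ∈ F, b ∈ B) → (∀ b ∈ F', b ∈ B) →
      Multiset.card F + Multiset.card F' ≤ t → (F.map φ).sum = (F'.map φ).sum → F = F') :
    IsTIndep t (B.image φ) := by
  intro c hc habs hsum x
  have hinj : Set.InjOn φ B := fun b hb b' hb' h => by
    simpa using hφ {b} {b'} (by simpa) (by simpa) (by simpa) (by simpa)
  rw [sum_image hinj] at habs hsum
  have hmem (m : ι → ℕ) : ∀ x ∈ ∑ b ∈ B, Multiset.replicate (m b) b, x ∈ B := fun x hx => by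
    obtain ⟨b, hb, hx⟩ := Multiset.mem_sum.1 hx
    exact Multiset.eq_of_mem_replicate hx ▸ hb
  have hpos_neg := hφ (∑ b ∈ B, .replicate (c (φ b)).toNat b)
    (∑ b ∈ B, .replicate (-c (φ b)).toNat b) (hmem _) (hmem _) ?_ ?_
  · by_cases hx : x ∈ B.image φ
    · obtain ⟨b, hb, rfl⟩ := mem_image.1 hx
      have := congrArg (Multiset.count b) hpos_neg
      simp only [Multiset.count_sum', Multiset.count_replicate, sum_ite_eq', if_pos hb] at this
      omega
    · exact hc x hx
  · have habs' : ((∑ b ∈ B, (c (φ b)).natAbs : ℕ) : ℤ) ≤ t := by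
      push_cast [Int.natCast_natAbs]; exact habs
    simp only [Multiset.card_sum, Multiset.card_replicate, ← sum_add_distrib,
      Int.toNat_add_toNat_neg_eq_natAbs]
    exact_mod_cast habs'
  · rw [Multiset.sum_map_sum_replicate, Multiset.sum_map_sum_replicate, ← sub_eq_zero, ← hsum,
      ← sum_sub_distrib]
    refine sum_congr rfl fun b _ => ?_
    rw [← natCast_zsmul, ← natCast_zsmul, ← sub_smul, Int.toNat_sub_toNat_neg]

theorem IsBhSeq.eq_of_card_le {h : ℕ} {B : Finset ℕ} (hB : IsBhSeq h B) (hne : B.Nonempty)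
    {f g : Multiset ℕ} (hf : ∀ x ∈ f, x ∈ B) (hg : ∀ x ∈ g, x ∈ B)
    (hcard : Multiset.card f = Multiset.card g) (hle : Multiset.card f ≤ h)
    (hsum : f.sum = g.sum) : f = g := by
  obtain ⟨b, hb⟩ := hne
  set pad := Multiset.replicate (h - Multiset.card f) b
  have hpad : ∀ x ∈ pad, x ∈ B := fun x hx => Multiset.eq_of_mem_replicate hx ▸ hb
  have hmem (s : Multiset ℕ) (hs : ∀ x ∈ s, x ∈ B) : ∀ x ∈ s + pad, x ∈ B := fun x hx =>
    (Multiset.mem_add.1 hx).elim (hs x) (hpad x)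
  refine add_right_cancel (hB (f + pad) (g + pad) (hmem f hf) (hmem g hg) ?_ ?_ ?_)
  · simp only [pad, Multiset.card_add, Multiset.card_replicate]; omega
  · simp only [pad, Multiset.card_add, Multiset.card_replicate]; omega
  · rw [Multiset.sum_add, Multiset.sum_add, hsum]

theorem mul_lt_tsub_mul_add {p m h N k : ℕ} (hh : 2 ≤ h) (hN : 1 ≤ N) (hk : h * N ≤ k)
    (hmp : m < p) (hpm : p + m ≤ 2 * h) : p * N < (p - m) * k + m := by
  obtain ⟨d, rfl⟩ : ∃ d, p = m + d + 1 := ⟨p - m - 1, by omega⟩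
  have hd : m + d + 1 - m = d + 1 := by omega
  calc (m + d + 1) * N < h * (d + 1) * N + m := by
        rcases d with _ | d
        · have : m + 1 ≤ h := by omega
          rcases m with _ | m
          · nlinarith
          · nlinarith [Nat.mul_le_mul_right N this]
        · have : m + d + 3 ≤ h * (d + 2) := by nlinarith
          nlinarith [Nat.mul_le_mul_right N this]
    _ ≤ (m + d + 1 - m) * k + m := by rw [hd]; nlinarith

theorem card_le_of_card_mul_add_sum_eq {h N k : ℕ} {F G : Multiset ℕ} (hh : 2 ≤ h)
    (hk : h * N ≤ k) (hF : ∀ b ∈ F, b ∈ Icc 1 N) (hG : ∀ b ∈ G, b ∈ Icc 1 N)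
    (hcard : Multiset.card F + Multiset.card G ≤ 2 * h)
    (heq : Multiset.card F * k + G.sum = Multiset.card G * k + F.sum) :
    Multiset.card F ≤ Multiset.card G := by
  by_contra! hlt
  obtain ⟨b, hb⟩ := Multiset.card_pos_iff_exists_mem.1 (by omega : 0 < Multiset.card F)
  have hN : 1 ≤ N := (mem_Icc.1 (hF b hb)).1.trans (mem_Icc.1 (hF b hb)).2
  have hFs : F.sum ≤ Multiset.card F * N := by
    simpa using Multiset.sum_le_card_nsmul F N fun b hb => (mem_Icc.1 (hF b hb)).2
  have hGs : Multiset.card G ≤ G.sum := by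
    simpa using Multiset.card_nsmul_le_sum (a := 1) fun b hb => (mem_Icc.1 (hG b hb)).1
  have := mul_lt_tsub_mul_add hh hN hk hlt (by omega)
  have hmk : Multiset.card G * k ≤ Multiset.card F * k := Nat.mul_le_mul_right k hlt.le
  rw [Nat.sub_mul] at this
  omega

theorem card_eq_and_sum_eq_of_sum_map_tsub_eq {h N k : ℕ} {F G : Multiset ℕ} (hh : 2 ≤ h)
    (hk : h * N ≤ k) (hF : ∀ b ∈ F, b ∈ Icc 1 N) (hG : ∀ b ∈ G, b ∈ Icc 1 N)
    (hcard : Multiset.card F + Multiset.card G ≤ 2 * h)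
    (hsum : (F.map (k - ·)).sum = (G.map (k - ·)).sum) :
    Multiset.card F = Multiset.card G ∧ F.sum = G.sum := by
  have hNk : N ≤ k := (Nat.le_mul_of_pos_left N (by omega)).trans hk
  have hF' := Multiset.sum_map_tsub_add_sum fun b hb => (mem_Icc.1 (hF b hb)).2.trans hNk
  have hG' := Multiset.sum_map_tsub_add_sum fun b hb => (mem_Icc.1 (hG b hb)).2.trans hNk
  have heq : Multiset.card F * k + G.sum = Multiset.card G * k + F.sum := by omega
  have hcardFG : Multiset.card F = Multiset.card G :=
    le_antisymm (card_le_of_card_mul_add_sum_eq hh hk hF hG hcard heq)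
      (card_le_of_card_mul_add_sum_eq hh hk hG hF (by omega) heq.symm)
  refine ⟨hcardFG, ?_⟩
  rw [hcardFG] at heq
  omega

theorem sum_map_tsub_eq_of_natCast_eq {n t k : ℕ} {F G : Multiset ℕ} (ht : 1 ≤ t)
    (hk : 1 ≤ k) (htk : t * k ≤ n) (hF : ∀ b ∈ F, 1 ≤ b) (hG : ∀ b ∈ G, 1 ≤ b)
    (hFt : Multiset.card F ≤ t) (hGt : Multiset.card G ≤ t)
    (h : (F.map fun b => ((k - b : ℕ) : ZMod n)).sum =
      (G.map fun b => ((k - b : ℕ) : ZMod n)).sum) :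
    (F.map (k - ·)).sum = (G.map (k - ·)).sum := by
  have hlt (F : Multiset ℕ) (hF : ∀ b ∈ F, 1 ≤ b) (hFt : Multiset.card F ≤ t) :
      (F.map (k - ·)).sum < n := calc
    _ ≤ Multiset.card F * (k - 1) := by
      simpa using Multiset.sum_le_card_nsmul (F.map (k - ·)) (k - 1)
        (Multiset.forall_mem_map_iff.2 fun b hb => by have := hF b hb; omega)
    _ ≤ t * (k - 1) := Nat.mul_le_mul_right _ hFt
    _ < n := by
      have := Nat.le_mul_of_pos_right t hk
      rw [Nat.mul_sub_one]
      omega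
  have hcast : (((F.map (k - ·)).sum : ℕ) : ZMod n) = (((G.map (k - ·)).sum : ℕ) : ZMod n) := by
    simpa only [Nat.cast_multiset_sum, Multiset.map_map, Function.comp_def] using h
  rwa [ZMod.natCast_eq_natCast_iff', Nat.mod_eq_of_lt (hlt F hF hFt),
    Nat.mod_eq_of_lt (hlt G hG hGt)] at hcast

theorem stmt14_general (n t : ℕ) (ht : 3 ≤ t)
    (B : Finset ℕ) (hB : B ⊆ Finset.Icc 1 (n / t / ((t + 1) / 2)))
    (hBh : IsBhSeq (t / 2) B) :
    IsTIndep t (B.image (fun b => ((n / t - b : ℕ) : ZMod n))) := by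
  rcases B.eq_empty_or_nonempty with rfl | ⟨b₀, hb₀⟩
  · exact fun c hc _ _ x => hc x (by simp)
  set k := n / t
  set h := (t + 1) / 2
  have hhN : h * (k / h) ≤ k := Nat.mul_div_le k h
  have htk : t * k ≤ n := Nat.mul_div_le n t
  have hk : 1 ≤ k :=
    (mem_Icc.1 (hB hb₀)).1.trans ((mem_Icc.1 (hB hb₀)).2.trans (Nat.div_le_self k h))
  refine isTIndep_image_of_forall_sum_map_eq (by omega) fun F G hF hG hcard hsum => ?_
  have hFI : ∀ b ∈ F, b ∈ Icc 1 (k / h) := fun b hb => hB (hF b hb)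
  have hGI : ∀ b ∈ G, b ∈ Icc 1 (k / h) := fun b hb => hB (hG b hb)
  have hsum' := sum_map_tsub_eq_of_natCast_eq (by omega) hk htk
    (fun b hb => (mem_Icc.1 (hFI b hb)).1) (fun b hb => (mem_Icc.1 (hGI b hb)).1)
    (by omega) (by omega) hsum
  obtain ⟨hcardFG, hsumFG⟩ :=
    card_eq_and_sum_eq_of_sum_map_tsub_eq (by omega) hhN hFI hGI (by omega) hsum'
  exact hBh.eq_of_card_le ⟨b₀, hb₀⟩ hF hG hcardFG (by omega) hsumFG

theorem stmt14 (n t : ℕ) (ht : 3 ≤ t) (htn : t ≤ n - 1)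
    (B : Finset ℕ) (hB : B ⊆ Finset.Icc 1 (n / t / ((t + 1) / 2)))
    (hBh : IsBhSeq (t / 2) B) :
    IsTIndep t (B.image (fun b => ((n / t - b : ℕ) : ZMod n))) :=
  stmt14_general n t ht B hB hBh
end

section
/- Let G be a finite abelian group of order n ≥ 2, let t be a positive integer, and let m be a positive integer such that n > σ(G,t)·C(2m-2+t, t), where C(·,·) denotes the binomial coefficient and σ(G,t) = Σ_{h=1}^{t} |{x ∈ G : hx = 0}|. Then G contains a t-independent set of size m. -/
/-!
Greedy construction. If `A` is `t`-independent and `A ∪ {x}` is not, the offending relation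
has a nonzero coefficient `λ` at `x`, so `|λ| • x` is a combination of elements of `A` with
coefficient weight at most `t - 1`. By stars and bars there are at most
`C(2|A| + t - 1, t - 1)` such combinations, and for each `h ≤ t` every fibre of `x ↦ h • x` has
at most `|Tor(G, h)|` elements. Hence while `|A| < m` at most
`σ(G, t) C(2|A| + t - 1, t - 1) + |A| ≤ σ(G, t) C(2m - 2 + t, t) < n` elements are excluded,
and `A` can be extended.
-/

open Finset

noncomputable def l1Ball (ι : Type*) [Fintype ι] [DecidableEq ι] (s : ℕ) : Finset (ι → ℤ) :=
  {c ∈ Fintype.piFinset fun _ => Icc (-(s : ℤ)) s | ∑ i, (c i).natAbs ≤ s}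

section l1Ball
variable {ι : Type*} [Fintype ι] [DecidableEq ι] {s : ℕ}

theorem mem_l1Ball {c : ι → ℤ} : c ∈ l1Ball ι s ↔ ∑ i, (c i).natAbs ≤ s := by
  refine ⟨fun hc => (mem_filter.1 hc).2, fun hc => mem_filter.2 ⟨?_, hc⟩⟩
  refine Fintype.mem_piFinset.2 fun i => mem_Icc.2 (abs_le.1 ?_)
  rw [← Int.natCast_natAbs]
  exact_mod_cast
    (single_le_sum (f := fun j => (c j).natAbs) (fun j _ => Nat.zero_le _) (mem_univ i)).trans hc

/-- Stars and bars: `c` is encoded by the counts `(c i)⁺`, `(c i)⁻` and the slack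
`s - ∑ |c i|`, a function on `2 * card ι + 1` points summing to `s`. -/
theorem card_l1Ball_le : #(l1Ball ι s) ≤ (2 * Fintype.card ι + s).choose s := by
  let counts (c : ι → ℤ) : Option (ι ⊕ ι) → ℕ := fun o =>
    o.elim (s - ∑ i, (c i).natAbs) (Sum.elim (fun i => (c i).toNat) fun i => (-c i).toNat)
  have sum_counts (c : l1Ball ι s) : ∑ o, counts c o = s := by
    have hc := mem_l1Ball.1 c.2
    simp only [counts, Fintype.sum_option, Fintype.sum_sum_type, Option.elim, Sum.elim_inl,
      Sum.elim_inr, ← sum_add_distrib, Int.toNat_add_toNat_neg_eq_natAbs]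
    omega
  have counts_injective : Function.Injective counts := fun c c' h => funext fun i => by
    rw [← Int.toNat_sub_toNat_neg (c i), ← Int.toNat_sub_toNat_neg (c' i)]
    have hp := congrFun h (some (.inl i))
    have hn := congrFun h (some (.inr i))
    simp only [counts, Option.elim, Sum.elim_inl, Sum.elim_inr] at hp hn
    rw [hp, hn]
  let encode (c : l1Ball ι s) : Sym (Option (ι ⊕ ι)) s :=
    (Sym.equivNatSumOfFintype _ s).symm ⟨counts c, sum_counts c⟩
  have encode_injective : Function.Injective encode := fun c c' h =>
    Subtype.ext (counts_injective (congrArg Subtype.val ((Equiv.injective _) h)))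
  calc #(l1Ball ι s) = Fintype.card (l1Ball ι s) := (Fintype.card_coe _).symm
    _ ≤ Fintype.card (Sym (Option (ι ⊕ ι)) s) := Fintype.card_le_of_injective _ encode_injective
    _ = (2 * Fintype.card ι + s).choose s := by
      rw [Sym.card_sym_eq_choose, Fintype.card_option, Fintype.card_sum]
      congr 1
      omega

end l1Ball

section Torsion
variable {G : Type*} [AddCommGroup G] [Fintype G] [DecidableEq G]

theorem card_nsmul_fiber_le (h : ℕ) (b : G) :
    #{x | h • x = b} ≤ Nat.card {x : G // h • x = 0} := by
  rw [Nat.card_eq_fintype_card, Fintype.card_subtype]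
  by_cases hb : b ∈ Set.range (nsmulAddMonoidHom (α := G) h)
  · exact (AddMonoidHom.card_fiber_eq_of_mem_range (nsmulAddMonoidHom h) hb ⟨0, smul_zero h⟩).le
  · have hempty : ∀ x : G, h • x ≠ b := fun x hx => hb ⟨x, hx⟩
    simp [hempty]

theorem card_nsmul_preimage_le (h : ℕ) (S : Finset G) :
    #{x | h • x ∈ S} ≤ Nat.card {x : G // h • x = 0} * #S :=
  card_le_mul_card_image_of_maps_to (fun _ hx => (mem_filter.1 hx).2) _ fun b _ =>
    (card_le_card fun x hx => by simp_all).trans (card_nsmul_fiber_le h b)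

end Torsion

section Independence
variable {G : Type*} [AddCommGroup G] [DecidableEq G]

noncomputable def boundedCombinations (A : Finset G) (s : ℕ) : Finset G :=
  (l1Ball A s).image fun c : A → ℤ => ∑ a, c a • (a : G)

theorem IsTIndep.insert_of_nsmul_notMem {t : ℕ} {A : Finset G} {x : G} (hA : IsTIndep t A)
    (hxA : x ∉ A) (hx : ∀ h ∈ Icc 1 t, h • x ∉ boundedCombinations A (t - 1)) :
    IsTIndep t (insert x A) := by
  intro c hc hnorm hsum
  rw [sum_insert hxA] at hnorm hsum
  by_cases hcx : c x = 0
  · refine hA c (fun y hy => ?_) (by simpa [hcx] using hnorm) (by simpa [hcx] using hsum)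
    by_cases hyx : y = x
    · exact hyx ▸ hcx
    · exact hc y (by simp [hy, hyx])
  · exfalso
    have hnormA : (c x).natAbs + ∑ y ∈ A, (c y).natAbs ≤ t := by
      have : ((c x).natAbs : ℤ) + ∑ y ∈ A, ((c y).natAbs : ℤ) ≤ t := by
        simpa only [Int.natCast_natAbs] using hnorm
      exact_mod_cast this
    have hpos : 0 < (c x).natAbs := Int.natAbs_pos.2 hcx
    -- `|c x| • x` is, up to the sign of `c x`, minus the rest of the relation
    refine hx (c x).natAbs (mem_Icc.2 ⟨hpos, by omega⟩) ?_
    rw [boundedCombinations, mem_image]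
    refine ⟨fun a : A => -(c x).sign * c a, ?_, ?_⟩
    · rw [mem_l1Ball]
      simp only [Int.natAbs_mul, Int.natAbs_neg, Int.natAbs_sign_of_ne_zero hcx, one_mul,
        sum_coe_sort A fun y => (c y).natAbs]
      omega
    · rw [sum_coe_sort A fun y => (-(c x).sign * c y) • y, ← natCast_zsmul, ← Int.sign_mul_self,
        mul_smul, eq_neg_of_add_eq_zero_left hsum, smul_neg, smul_sum, ← sum_neg_distrib]
      simp only [mul_smul, neg_smul]

end Independence

theorem le_choose_two_mul_add_succ (k r : ℕ) : k ≤ (2 * k + r).choose (r + 1) := by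
  induction r with
  | zero => rw [Nat.choose_one_right]; omega
  | succ r ih => rw [← add_assoc, Nat.choose_succ_succ']; omega

theorem mul_choose_add_le {σ t k m : ℕ} (hσ : 1 ≤ σ) (ht : 1 ≤ t) (hk : k < m) :
    σ * (2 * k + (t - 1)).choose (t - 1) + k ≤ σ * (2 * m - 2 + t).choose t := by
  obtain ⟨r, rfl⟩ : ∃ r, t = r + 1 := ⟨t - 1, by omega⟩
  rw [Nat.add_sub_cancel]
  calc σ * (2 * k + r).choose r + k
      ≤ σ * (2 * k + r).choose r + σ * (2 * k + r).choose (r + 1) :=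
        Nat.add_le_add_left
          ((le_choose_two_mul_add_succ k r).trans (Nat.le_mul_of_pos_left _ hσ)) _
    _ = σ * (2 * k + r + 1).choose (r + 1) := by rw [Nat.choose_succ_succ', mul_add]
    _ ≤ σ * (2 * m - 2 + (r + 1)).choose (r + 1) :=
        Nat.mul_le_mul_left _ (Nat.choose_le_choose _ (by omega))

theorem IsTIndep.exists_insert {G : Type*} [AddCommGroup G] [Fintype G] [DecidableEq G]
    {t : ℕ} {A : Finset G} (hA : IsTIndep t A)
    (hcard : (∑ h ∈ Icc 1 t, Nat.card {x : G // h • x = 0}) * (2 * #A + (t - 1)).choose (t - 1)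
      + #A < Fintype.card G) :
    ∃ x ∉ A, IsTIndep t (insert x A) := by
  set σ := ∑ h ∈ Icc 1 t, Nat.card {x : G // h • x = 0}
  set S := boundedCombinations A (t - 1)
  set bad := (Icc 1 t).biUnion fun h => ({x | h • x ∈ S} : Finset G)
  have hbad : #bad ≤ σ * (2 * #A + (t - 1)).choose (t - 1) :=
    calc #bad ≤ ∑ h ∈ Icc 1 t, #({x | h • x ∈ S} : Finset G) := card_biUnion_le
      _ ≤ ∑ h ∈ Icc 1 t, Nat.card {x : G // h • x = 0} * #S :=
        sum_le_sum fun h _ => card_nsmul_preimage_le h S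
      _ = σ * #S := (sum_mul _ _ _).symm
      _ ≤ _ := Nat.mul_le_mul_left _ <| card_image_le.trans <| card_l1Ball_le.trans_eq <| by
        rw [Fintype.card_coe]
  obtain ⟨x, -, hx⟩ := exists_mem_notMem_of_card_lt_card (s := bad ∪ A) (t := univ)
    ((card_union_le _ _).trans_lt (by rw [card_univ]; omega))
  rw [mem_union, not_or] at hx
  refine ⟨x, hx.2, hA.insert_of_nsmul_notMem hx.2 fun h hh hS => hx.1 ?_⟩
  exact mem_biUnion.2 ⟨h, hh, mem_filter.2 ⟨mem_univ x, hS⟩⟩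

theorem stmt17_general {G : Type*} [AddCommGroup G] [Fintype G]
    (t : ℕ) (ht : 0 < t) (m : ℕ)
    (h : (∑ h ∈ Finset.Icc 1 t, Nat.card {x : G // h • x = 0}) *
        Nat.choose (2 * m - 2 + t) t < Fintype.card G) :
    ∃ A : Finset G, IsTIndep t A ∧ A.card = m := by
  classical
  have hσ : 1 ≤ ∑ h ∈ Icc 1 t, Nat.card {x : G // h • x = 0} :=
    calc 1 ≤ Nat.card {x : G // 1 • x = 0} :=
          Nat.card_pos_iff.2 ⟨⟨⟨0, smul_zero 1⟩⟩, inferInstance⟩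
      _ ≤ _ := single_le_sum (f := fun h => Nat.card {x : G // h • x = 0})
          (fun _ _ => Nat.zero_le _) (mem_Icc.2 ⟨le_rfl, ht⟩)
  suffices ∀ k ≤ m, ∃ A : Finset G, IsTIndep t A ∧ #A = k from this m le_rfl
  intro k
  induction k with
  | zero => exact fun _ => ⟨∅, fun c hc _ _ x => hc x (notMem_empty x), rfl⟩
  | succ k ih =>
    intro hk
    obtain ⟨A, hA, rfl⟩ := ih (by omega)
    obtain ⟨x, hxA, hx⟩ := hA.exists_insert ((mul_choose_add_le hσ ht hk).trans_lt h)
    exact ⟨_, hx, card_insert_of_notMem hxA⟩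

theorem stmt17 {G : Type*} [AddCommGroup G] [Fintype G]
    (hn : 2 ≤ Fintype.card G) (t : ℕ) (ht : 0 < t) (m : ℕ) (hm : 0 < m)
    (h : (∑ h ∈ Finset.Icc 1 t, Nat.card {x : G // h • x = 0}) *
        Nat.choose (2 * m - 2 + t) t < Fintype.card G) :
    ∃ A : Finset G, IsTIndep t A ∧ A.card = m :=
  stmt17_general t ht m h
end

section
/- Let G be a finite abelian group of order n ≥ 2 and let t ≥ 2 be an integer. Then (t!·n / 2^t)^(1/t) - t/2 < w(G,t) < (⌊t/2⌋!·n)^(1/⌊t/2⌋) + t/2; that is, G contains a weakly t-independent set of size greater than (t!·n / 2^t)^(1/t) - t/2, and every weakly t-independent subset of G has size less than (⌊t/2⌋!·n)^(1/⌊t/2⌋) + t/2. -/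
/-- A subset `A` of an (additive) abelian group is weakly `t`-independent if whenever
`λ₁a₁ + ⋯ + λₘaₘ = 0` with `a₁, …, aₘ` the (distinct) elements of `A`, each
`λᵢ ∈ {-1, 0, 1}`, and `|λ₁| + ⋯ + |λₘ| ≤ t`, all coefficients `λᵢ` vanish. -/
def IsWeakTIndep {G : Type*} [AddCommGroup G] (t : ℕ) (A : Finset G) : Prop :=
  ∀ c : G → ℤ, (∀ x ∉ A, c x = 0) → (∀ x, |c x| ≤ 1) →
    (∑ x ∈ A, |c x|) ≤ (t : ℤ) →
    (∑ x ∈ A, c x • x) = 0 → ∀ x, c x = 0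

/-- `wIndep G t` is the maximum size of a weakly `t`-independent subset of `G`. -/
noncomputable def wIndep (G : Type*) [AddCommGroup G] (t : ℕ) : ℕ :=
  sSup {m | ∃ A : Finset G, IsWeakTIndep t A ∧ A.card = m}


/-!
`A` is weakly `t`-independent exactly when no two disjoint subsets `P, N ⊆ A`, not both empty,
with `|P| + |N| ≤ t`, have equal sums. Let `m = |A|` for such an `A`.

Upper bound: distinct subsets of `A` with at most `s = ⌊t/2⌋` elements have distinct sums, so
`C(m, s) + 1 ≤ n`, while `(m - s)^s ≤ s! C(m, s)`.

Lower bound: if `A` has maximal size, every `g ∉ A` makes `A ∪ {g}` dependent, which writes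
`g = ΣP - ΣN` with `P, N ⊆ A` and `|P| + |N| < t`. Counting such pairs as subsets of `A ⊔ A`
gives `n ≤ Σ_{k<t} C(2m, k)`, and `t! Σ_{k<t} C(2m, k) < (2m + t)^t` by the binomial theorem.
-/

open Finset

namespace Nat

lemma factorial_mul_choose_le_pow_mul_pow_mul_choose (N : ℕ) {k t : ℕ} (hkt : k ≤ t) :
    t.factorial * N.choose k ≤ N ^ k * t ^ (t - k) * t.choose k :=
  calc t.factorial * N.choose k
      = t.choose k * N.descFactorial k * (t - k).factorial := by
        rw [← choose_mul_factorial_mul_factorial hkt, descFactorial_eq_factorial_mul_choose]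
        ring
    _ ≤ t.choose k * N ^ k * t ^ (t - k) := by
        gcongr
        · exact descFactorial_le_pow N k
        · exact (factorial_le_pow _).trans (Nat.pow_le_pow_left (sub_le t k) _)
    _ = N ^ k * t ^ (t - k) * t.choose k := by ring

lemma factorial_mul_sum_range_choose_lt_add_pow {N : ℕ} (hN : 0 < N) (t : ℕ) :
    t.factorial * ∑ k ∈ range t, N.choose k < (N + t) ^ t :=
  calc t.factorial * ∑ k ∈ range t, N.choose k
      ≤ ∑ k ∈ range t, N ^ k * t ^ (t - k) * t.choose k := by
        rw [mul_sum]
        exact sum_le_sum fun k hk ↦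
          factorial_mul_choose_le_pow_mul_pow_mul_choose N (mem_range.1 hk).le
    _ < ∑ k ∈ range (t + 1), N ^ k * t ^ (t - k) * t.choose k := by
        rw [sum_range_succ, Nat.sub_self, Nat.pow_zero, choose_self]
        simpa using Nat.pow_pos (n := t) hN
    _ = (N + t) ^ t := (add_pow N t t).symm

lemma pow_sub_lt_factorial_mul_choose_add_one (m s : ℕ) :
    (m - s) ^ s < s.factorial * (m.choose s + 1) :=
  calc (m - s) ^ s ≤ (m + 1 - s) ^ s := Nat.pow_le_pow_left (by omega) s
    _ ≤ m.descFactorial s := pow_sub_le_descFactorial m s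
    _ < s.factorial * (m.choose s + 1) := by
        rw [descFactorial_eq_factorial_mul_choose, Nat.mul_succ]
        exact Nat.lt_add_of_pos_right s.factorial_pos

end Nat

lemma rpow_one_div_lt_of_lt_pow {x y : ℝ} {k : ℕ} (hx : 0 ≤ x) (hy : 0 ≤ y) (hk : k ≠ 0)
    (h : x < y ^ k) : x ^ (1 / (k : ℝ)) < y := by
  rwa [one_div, Real.rpow_inv_lt_iff_of_pos hx hy (by positivity), Real.rpow_natCast]

lemma lt_rpow_one_div_of_pow_lt {x y : ℝ} {k : ℕ} (hx : 0 ≤ x) (hy : 0 ≤ y) (hk : k ≠ 0)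
    (h : x ^ k < y) : x < y ^ (1 / (k : ℝ)) := by
  rwa [one_div, Real.lt_rpow_inv_iff_of_pos hx hy (by positivity), Real.rpow_natCast]

lemma rpow_one_div_sub_lt_of_lt_add_pow {m t k : ℕ} (ht : t ≠ 0) (h : k < (2 * m + t) ^ t) :
    ((k : ℝ) / 2 ^ t) ^ (1 / (t : ℝ)) - t / 2 < m := by
  have hk : (k : ℝ) / 2 ^ t < ((m : ℝ) + t / 2) ^ t := by
    rw [div_lt_iff₀ (by positivity), ← mul_pow, add_mul, div_mul_cancel₀ _ two_ne_zero,
      mul_comm]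
    exact_mod_cast h
  linarith [rpow_one_div_lt_of_lt_pow (by positivity) (by positivity) ht hk]

lemma lt_rpow_one_div_add_of_pow_sub_lt {m s k : ℕ} (hs : s ≠ 0) (h : (m - s) ^ s < k) :
    (m : ℝ) < (k : ℝ) ^ (1 / (s : ℝ)) + s := by
  have hk := lt_rpow_one_div_of_pow_lt (Nat.cast_nonneg _) (Nat.cast_nonneg _) hs
    (by exact_mod_cast h : ((m - s : ℕ) : ℝ) ^ s < k)
  rcases le_total s m with hsm | hms
  · rw [Nat.cast_sub hsm] at hk
    linarith
  · have : (m : ℝ) ≤ s := by exact_mod_cast hms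
    linarith [Real.rpow_nonneg (Nat.cast_nonneg k) (1 / (s : ℝ))]

section SignedIndicator

variable {G : Type*} [DecidableEq G] {A P N : Finset G}

/-- The coefficients `c` in `IsWeakTIndep` that encode the relation `ΣP - ΣN = 0`. -/
def signedIndicator (P N : Finset G) (x : G) : ℤ :=
  (if x ∈ P then 1 else 0) - (if x ∈ N then 1 else 0)

lemma abs_signedIndicator (hPN : Disjoint P N) (x : G) :
    |signedIndicator P N x| = (if x ∈ P then 1 else 0) + (if x ∈ N then 1 else 0) := by
  by_cases hP : x ∈ P
  · simp [signedIndicator, hP, disjoint_left.1 hPN hP]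
  · by_cases hN : x ∈ N <;> simp [signedIndicator, hP, hN]

lemma abs_signedIndicator_le_one (hPN : Disjoint P N) (x : G) :
    |signedIndicator P N x| ≤ 1 := by
  rw [abs_signedIndicator hPN]
  by_cases hP : x ∈ P
  · simp [hP, disjoint_left.1 hPN hP]
  · split_ifs <;> simp

lemma sum_abs_signedIndicator (hPN : Disjoint P N) (hP : P ⊆ A) (hN : N ⊆ A) :
    ∑ x ∈ A, |signedIndicator P N x| = #P + #N := by
  simp_rw [abs_signedIndicator hPN, sum_add_distrib, sum_ite_mem, inter_eq_right.2 hP,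
    inter_eq_right.2 hN, sum_const, nsmul_one]

lemma signedIndicator_filter_eq {c : G → ℤ} {x : G} (hx : x ∈ A) (hc : |c x| ≤ 1) :
    signedIndicator {y ∈ A | c y = 1} {y ∈ A | c y = -1} x = c x := by
  obtain h | h | h : c x = -1 ∨ c x = 0 ∨ c x = 1 := by have := abs_le.1 hc; omega
  all_goals simp [signedIndicator, hx, h]

end SignedIndicator

section WeakIndependence

variable {G : Type*} [AddCommGroup G] [DecidableEq G] {t : ℕ} {A P N : Finset G}

lemma sum_signedIndicator_smul (hP : P ⊆ A) (hN : N ⊆ A) :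
    ∑ x ∈ A, signedIndicator P N x • x = ∑ x ∈ P, x - ∑ x ∈ N, x := by
  simp_rw [signedIndicator, sub_smul, ite_smul, one_smul, zero_smul, sum_sub_distrib,
    sum_ite_mem, inter_eq_right.2 hP, inter_eq_right.2 hN]

theorem isWeakTIndep_iff :
    IsWeakTIndep t A ↔ ∀ P ⊆ A, ∀ N ⊆ A, Disjoint P N → #P + #N ≤ t →
      ∑ x ∈ P, x = ∑ x ∈ N, x → P = ∅ ∧ N = ∅ := by
  constructor
  · intro hA P hP N hN hPN hcard hsum
    have hzero := hA (signedIndicator P N)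
      (fun x hx ↦ by
        have hxP : x ∉ P := fun h ↦ hx (hP h)
        have hxN : x ∉ N := fun h ↦ hx (hN h)
        simp [signedIndicator, hxP, hxN])
      (abs_signedIndicator_le_one hPN)
      (by rw [sum_abs_signedIndicator hPN hP hN]; exact_mod_cast hcard)
      (by rw [sum_signedIndicator_smul hP hN, hsum, sub_self])
    constructor <;> refine eq_empty_of_forall_notMem fun x hx ↦ ?_
    · simpa [signedIndicator, hx, disjoint_left.1 hPN hx] using hzero x
    · simpa [signedIndicator, hx, disjoint_right.1 hPN hx] using hzero x
  · intro h c hoff habs hsum hrel x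
    set P := {y ∈ A | c y = 1}
    set N := {y ∈ A | c y = -1}
    have hPN : Disjoint P N := disjoint_filter.2 fun y _ h1 h2 ↦ by omega
    have hc : ∀ y ∈ A, signedIndicator P N y = c y := fun y hy ↦
      signedIndicator_filter_eq hy (habs y)
    obtain ⟨hP, hN⟩ := h P (filter_subset _ _) N (filter_subset _ _) hPN
      (by
        have := sum_abs_signedIndicator hPN (filter_subset _ A) (filter_subset _ A)
        rw [sum_congr rfl fun y hy ↦ congrArg abs (hc y hy)] at this
        omega)
      (by
        rw [← sub_eq_zero, ← sum_signedIndicator_smul (filter_subset _ A) (filter_subset _ A),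
          ← hrel]
        exact sum_congr rfl fun y hy ↦ by rw [hc y hy])
    by_cases hx : x ∈ A
    · rw [← hc x hx, hP, hN]
      simp [signedIndicator]
    · exact hoff x hx

lemma IsWeakTIndep.injOn_sum (hA : IsWeakTIndep t A) :
    Set.InjOn (fun S ↦ ∑ x ∈ S, x) {S | S ⊆ A ∧ 2 * #S ≤ t} := by
  rintro S ⟨hSA, hS⟩ T ⟨hTA, hT⟩ hST
  have := isWeakTIndep_iff.1 hA (S \ T) (sdiff_subset.trans hSA) (T \ S) (sdiff_subset.trans hTA)
    disjoint_sdiff_sdiff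
    (by
      have := card_le_card (sdiff_subset (s := S) (t := T))
      have := card_le_card (sdiff_subset (s := T) (t := S))
      omega)
    (sum_sdiff_eq_sum_sdiff_iff.2 hST)
  simp only [sdiff_eq_empty_iff_subset] at this
  exact this.1.antisymm this.2

lemma IsWeakTIndep.choose_add_one_le_card [Fintype G] (hA : IsWeakTIndep t A) {s : ℕ}
    (hs : s ≠ 0) (hst : 2 * s ≤ t) : (#A).choose s + 1 ≤ Fintype.card G := by
  have hsmall : ↑(insert ∅ (A.powersetCard s)) ⊆ {S | S ⊆ A ∧ 2 * #S ≤ t} := by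
    intro S hS
    simp only [coe_insert, Set.mem_insert_iff, mem_coe, mem_powersetCard] at hS
    rcases hS with rfl | ⟨hSA, rfl⟩
    · simp
    · exact ⟨hSA, hst⟩
  calc (#A).choose s + 1 = #(insert ∅ (A.powersetCard s)) := by
        rw [card_insert_of_notMem (by simp [mem_powersetCard, Ne.symm hs]), card_powersetCard]
    _ ≤ #(univ : Finset G) :=
        card_le_card_of_injOn _ (fun _ _ ↦ mem_coe.2 (mem_univ _)) (hA.injOn_sum.mono hsmall)
    _ = Fintype.card G := card_univ

lemma exists_sub_eq_of_mem_of_sum_eq {g : G} (hg : g ∈ P) (hP : P ⊆ insert g A)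
    (hN : N ⊆ insert g A) (hPN : Disjoint P N) (hcard : #P + #N ≤ t)
    (hsum : ∑ x ∈ P, x = ∑ x ∈ N, x) :
    ∃ P' ⊆ A, ∃ N' ⊆ A, #P' + #N' < t ∧ ∑ x ∈ P', x - ∑ x ∈ N', x = g := by
  refine ⟨N, (subset_insert_iff_of_notMem (disjoint_left.1 hPN hg)).1 hN, P.erase g,
    subset_insert_iff.1 hP, ?_, ?_⟩
  · have := card_erase_add_one hg
    omega
  · rw [← hsum, ← add_sum_erase P _ hg, add_sub_cancel_right]

lemma IsWeakTIndep.exists_sub_eq_of_not_insert (hA : IsWeakTIndep t A) {g : G}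
    (hg : ¬ IsWeakTIndep t (insert g A)) :
    ∃ P ⊆ A, ∃ N ⊆ A, #P + #N < t ∧ ∑ x ∈ P, x - ∑ x ∈ N, x = g := by
  simp only [isWeakTIndep_iff, not_forall, not_and_or] at hg
  obtain ⟨P, hP, N, hN, hPN, hcard, hsum, hne⟩ := hg
  by_cases hgP : g ∈ P
  · exact exists_sub_eq_of_mem_of_sum_eq hgP hP hN hPN hcard hsum
  by_cases hgN : g ∈ N
  · exact exists_sub_eq_of_mem_of_sum_eq hgN hN hP hPN.symm (by omega) hsum.symm
  have := isWeakTIndep_iff.1 hA P ((subset_insert_iff_of_notMem hgP).1 hP)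
    N ((subset_insert_iff_of_notMem hgN).1 hN) hPN hcard hsum
  tauto

lemma card_le_sum_range_choose_of_forall_exists_sub_eq [Fintype G]
    (h : ∀ g : G, ∃ P ⊆ A, ∃ N ⊆ A, #P + #N < t ∧ ∑ x ∈ P, x - ∑ x ∈ N, x = g) :
    Fintype.card G ≤ ∑ k ∈ range t, (2 * #A).choose k := by
  set D := (range t).biUnion fun k ↦ (A.disjSum A).powersetCard k
  have hcover : (univ : Finset G) ⊆ D.image fun u ↦ ∑ x ∈ u.toLeft, x - ∑ x ∈ u.toRight, x := by
    intro g _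
    obtain ⟨P, hP, N, hN, hcard, rfl⟩ := h g
    refine mem_image.2 ⟨P.disjSum N, mem_biUnion.2 ⟨#P + #N, mem_range.2 hcard, ?_⟩, by simp⟩
    exact mem_powersetCard.2 ⟨by simp [disjSum_subset, hP, hN], card_disjSum P N⟩
  calc Fintype.card G ≤ #D := (card_le_card hcover).trans card_image_le
    _ ≤ ∑ k ∈ range t, #((A.disjSum A).powersetCard k) := card_biUnion_le
    _ = ∑ k ∈ range t, (2 * #A).choose k := by simp [card_powersetCard, two_mul]

lemma IsWeakTIndep.card_le_sum_range_choose [Fintype G] (hA : IsWeakTIndep t A) (ht : 2 ≤ t)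
    (hmax : ∀ g ∉ A, ¬ IsWeakTIndep t (insert g A)) :
    Fintype.card G ≤ ∑ k ∈ range t, (2 * #A).choose k := by
  refine card_le_sum_range_choose_of_forall_exists_sub_eq fun g ↦ ?_
  by_cases hg : g ∈ A
  · exact ⟨{g}, by simpa using hg, ∅, empty_subset A, by simp; omega, by simp⟩
  · exact hA.exists_sub_eq_of_not_insert (hmax g hg)

end WeakIndependence

section Maximal

variable {G : Type*} [AddCommGroup G] {t : ℕ}

lemma isWeakTIndep_empty : IsWeakTIndep t (∅ : Finset G) :=
  fun _ hoff _ _ _ x ↦ hoff x (notMem_empty x)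

variable [Fintype G]

variable (G t) in
lemma bddAbove_card_isWeakTIndep :
    BddAbove {m | ∃ A : Finset G, IsWeakTIndep t A ∧ A.card = m} :=
  ⟨Fintype.card G, by rintro _ ⟨A, -, rfl⟩; exact card_le_univ A⟩

lemma IsWeakTIndep.card_le_wIndep {A : Finset G} (hA : IsWeakTIndep t A) : #A ≤ wIndep G t :=
  le_csSup (bddAbove_card_isWeakTIndep G t) ⟨A, hA, rfl⟩

variable (G t) in
lemma exists_maximal_isWeakTIndep [DecidableEq G] :
    ∃ A : Finset G, IsWeakTIndep t A ∧ #A = wIndep G t ∧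
      ∀ g ∉ A, ¬ IsWeakTIndep t (insert g A) := by
  obtain ⟨A, hA, hAm⟩ : wIndep G t ∈ {m | ∃ A : Finset G, IsWeakTIndep t A ∧ #A = m} :=
    Nat.sSup_mem ⟨0, ∅, isWeakTIndep_empty, rfl⟩ (bddAbove_card_isWeakTIndep G t)
  refine ⟨A, hA, hAm, fun g hg hgA ↦ ?_⟩
  have := hgA.card_le_wIndep
  rw [card_insert_of_notMem hg] at this
  omega

end Maximal

theorem stmt19 {G : Type*} [AddCommGroup G] [Fintype G]
    (hn : 2 ≤ Fintype.card G) (t : ℕ) (ht : 2 ≤ t) :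
    ((Nat.factorial t : ℝ) * (Fintype.card G : ℝ) / 2 ^ t) ^ ((1 : ℝ) / (t : ℝ)) -
        (t : ℝ) / 2 < (wIndep G t : ℝ) ∧
    (wIndep G t : ℝ) <
      ((Nat.factorial (t / 2) : ℝ) * (Fintype.card G : ℝ)) ^
          ((1 : ℝ) / ((t / 2 : ℕ) : ℝ)) + (t : ℝ) / 2 := by
  classical
  obtain ⟨A, hA, hAm, hmax⟩ := exists_maximal_isWeakTIndep G t
  have hcover := hA.card_le_sum_range_choose ht hmax
  have hpack := hA.choose_add_one_le_card (s := t / 2) (by omega) (by omega)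
  rw [hAm] at hcover hpack
  set m := wIndep G t
  set n := Fintype.card G
  -- for `m = 0` the covering bound reads `n ≤ 1`
  have hm : 0 < m := by
    by_contra! hm0
    obtain ⟨u, rfl⟩ := Nat.exists_eq_add_of_le' ht
    simp [Nat.le_zero.1 hm0, sum_range_succ'] at hcover
    omega
  constructor
  · have := rpow_one_div_sub_lt_of_lt_add_pow (k := t.factorial * n) (by omega) <|
      (Nat.mul_le_mul_left _ hcover).trans_lt
        (Nat.factorial_mul_sum_range_choose_lt_add_pow (by omega) t)
    exact_mod_cast this
  · have := lt_rpow_one_div_add_of_pow_sub_lt (k := (t / 2).factorial * n) (by omega) <|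
      (Nat.pow_sub_lt_factorial_mul_choose_add_one m (t / 2)).trans_le
        (Nat.mul_le_mul_left _ hpack)
    have hs : ((t / 2 : ℕ) : ℝ) ≤ t / 2 := by
      rw [le_div_iff₀ two_pos]
      exact_mod_cast Nat.div_mul_le_self t 2
    push_cast at this
    linarith
end
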